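/- arXiv:2601.13272 — 4 statements merged into one kernel-verified Lean document; each statement's English description precedes it below -/
import Mathlib

section
/- Let X_1,...,X_{T} be i.i.d. with variance μ₂ and fourth central moment μ₄ < ∞, and for 2 ≤ T' < T let V(T') and V(T) be nested unbiased sample variances sharing the first T' samples. Then Var[V(T) - V(T')] = (1/T' - 1/T)(μ₄ - 3μ₂²) + 2(1/(T'-1) - 1/(T-1)) μ₂². -/
/-!
Centred at the mean, `V(S)` is the quadratic form `∑ a^S_{ij} Y_i Y_j` in `Y_i = X_i - μ`, where
`a^S = (I - J/S)/(S - 1)` on `[0, S)²`. Hence `V(T) - V(T')` is the quadratic form with the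
symmetric coefficients `c = a^T - a^{T'}`. For independent centred `Y_i` with common second and
fourth moments, induction on the number of variables, splitting off the last variable (which is
independent of the quadratic and linear forms in the earlier ones), gives
`Var(∑ c_{ij} Y_i Y_j) = (μ₄ - 3μ₂²) ∑ c_{ii}² + 2μ₂² ∑ c_{ij}²`.
Finally `∑ c_{ii}² = 1/T' - 1/T` and, since `∑ a^S_{ij} a^R_{ij} = 1/(R - 1)` for `2 ≤ S ≤ R`,
`∑ c_{ij}² = 1/(T' - 1) - 1/(T - 1)`.
-/

open MeasureTheory ProbabilityTheory Finset
open scoped ENNReal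

instance : ENNReal.HolderTriple 4 4 2 where
  inv_add_inv_eq_inv := by
    have h := ENNReal.add_halves (2 : ℝ≥0∞)⁻¹
    rwa [ENNReal.div_eq_inv_mul, ← ENNReal.mul_inv (by simp) (by simp),
      show (2 : ℝ≥0∞) * 2 = 4 by norm_num] at h

theorem Finset.sum_range_ite_lt {M : Type*} [AddCommMonoid M] {n m : ℕ} (h : n ≤ m)
    (f : ℕ → M) : ∑ i ∈ range m, (if i < n then f i else 0) = ∑ i ∈ range n, f i := by
  rw [← sum_filter]
  congr 1
  ext i
  simp only [mem_filter, mem_range]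
  omega

theorem Finset.sum_range_sum_range_ite_lt {M : Type*} [AddCommMonoid M] {n m : ℕ} (h : n ≤ m)
    (f : ℕ → ℕ → M) :
    ∑ i ∈ range m, ∑ j ∈ range m, (if i < n ∧ j < n then f i j else 0)
      = ∑ i ∈ range n, ∑ j ∈ range n, f i j := by
  simp_rw [ite_and, sum_ite_irrel, sum_const_zero, sum_range_ite_lt h]

theorem Finset.sum_sum_ite_sub_mul_ite_sub (n : ℕ) (a b : ℝ) :
    ∑ i ∈ range n, ∑ j ∈ range n,
      ((if i = j then 1 else 0) - a) * ((if i = j then 1 else 0) - b)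
      = n - n * a - n * b + n ^ 2 * a * b := by
  have h : ∀ i j : ℕ, ((if i = j then (1 : ℝ) else 0) - a) * ((if i = j then 1 else 0) - b)
      = (if i = j then 1 - a - b else 0) + a * b := by
    intro i j; split_ifs <;> ring
  simp [h, sum_add_distrib, sum_range_ite_lt le_rfl]
  ring

section
variable {Ω : Type*} {mΩ : MeasurableSpace Ω} {P : Measure Ω}

theorem integral_sq_add_add {Q U W : Ω → ℝ} (a b : ℝ) (hQ : MemLp Q 2 P) (hU : MemLp U 2 P)
    (hW : MemLp W 2 P) :
    ∫ ω, (Q ω + a * U ω + b * W ω) ^ 2 ∂P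
      = ∫ ω, Q ω ^ 2 ∂P + 2 * a * ∫ ω, Q ω * U ω ∂P + 2 * b * ∫ ω, Q ω * W ω ∂P
        + a ^ 2 * ∫ ω, U ω ^ 2 ∂P + 2 * a * b * ∫ ω, U ω * W ω ∂P
        + b ^ 2 * ∫ ω, W ω ^ 2 ∂P := by
  have hQQ : Integrable (fun ω => Q ω ^ 2) P := hQ.integrable_sq
  have hUU : Integrable (fun ω => U ω ^ 2) P := hU.integrable_sq
  have hWW : Integrable (fun ω => W ω ^ 2) P := hW.integrable_sq
  have hQU : Integrable (fun ω => Q ω * U ω) P := hQ.integrable_mul hU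
  have hQW : Integrable (fun ω => Q ω * W ω) P := hQ.integrable_mul hW
  have hUW : Integrable (fun ω => U ω * W ω) P := hU.integrable_mul hW
  have h : ∀ ω, (Q ω + a * U ω + b * W ω) ^ 2 = Q ω ^ 2 + 2 * a * (Q ω * U ω)
      + 2 * b * (Q ω * W ω) + a ^ 2 * U ω ^ 2 + 2 * a * b * (U ω * W ω) + b ^ 2 * W ω ^ 2 := by
    intro ω; ring
  simp_rw [h]
  rw [integral_add (by fun_prop) (by fun_prop), integral_add (by fun_prop) (by fun_prop),
    integral_add (by fun_prop) (by fun_prop), integral_add (by fun_prop) (by fun_prop),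
    integral_add (by fun_prop) (by fun_prop)]
  simp only [integral_const_mul]

theorem ProbabilityTheory.iIndepFun.indepFun_of_measurable_iSup {ι β γ : Type*}
    [MeasurableSpace β] [MeasurableSpace γ] {Y : ι → Ω → β} (hY : ∀ i, Measurable (Y i))
    (hind : iIndepFun Y P) {S : Set ι} {n : ι} (hn : n ∉ S) {F : Ω → γ}
    (hF : Measurable[⨆ i ∈ S, MeasurableSpace.comap (Y i) ‹_›] F) :
    IndepFun F (Y n) P := by
  rw [IndepFun_iff_Indep]
  refine indep_of_indep_of_le (indep_iSup_of_disjoint (fun i => (hY i).comap_le)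
    ((iIndepFun_iff_iIndep _ _ _).1 hind) (Set.disjoint_singleton_right.2 hn)) hF.comap_le ?_
  exact le_iSup₂ (f := fun i (_ : i ∈ ({n} : Set ι)) => MeasurableSpace.comap (Y i) ‹_›) n rfl

theorem integral_sq_add_mul_add_sq_of_indepFun {Q L A : Ω → ℝ} (k : ℝ)
    (hQ : MemLp Q 2 P) (hL : MemLp L 4 P) (hA : MemLp A 4 P)
    (hind : IndepFun (fun ω => (Q ω, L ω)) A P) (hL0 : ∫ ω, L ω ∂P = 0)
    (hA0 : ∫ ω, A ω ∂P = 0) :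
    ∫ ω, (Q ω + 2 * (L ω * A ω) + k * A ω ^ 2) ^ 2 ∂P
      = ∫ ω, Q ω ^ 2 ∂P + 4 * (∫ ω, L ω ^ 2 ∂P) * (∫ ω, A ω ^ 2 ∂P)
        + k ^ 2 * ∫ ω, A ω ^ 4 ∂P + 2 * k * (∫ ω, Q ω ∂P) * ∫ ω, A ω ^ 2 ∂P := by
  have hQL : AEMeasurable (fun ω => (Q ω, L ω)) P :=
    hQ.1.aemeasurable.prodMk hL.1.aemeasurable
  have hfactor : ∀ {φ : ℝ × ℝ → ℝ} {ψ : ℝ → ℝ}, Measurable φ → Measurable ψ →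
      ∫ ω, φ (Q ω, L ω) * ψ (A ω) ∂P = (∫ ω, φ (Q ω, L ω) ∂P) * ∫ ω, ψ (A ω) ∂P :=
    fun hφ hψ => (hind.comp hφ hψ).integral_mul_eq_mul_integral
      (hφ.comp_aemeasurable hQL).aestronglyMeasurable
      (hψ.comp_aemeasurable hA.1.aemeasurable).aestronglyMeasurable
  have hA2 : MemLp (fun ω => A ω ^ 2) 2 P := by simpa only [sq] using hA.mul' hA
  rw [integral_sq_add_add 2 k hQ (hA.mul' hL) hA2]
  have hQLA : ∫ ω, Q ω * (L ω * A ω) ∂P = 0 := by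
    simpa only [mul_assoc, hA0, mul_zero] using
      hfactor (φ := fun p => p.1 * p.2) (ψ := fun a => a) (by fun_prop) (by fun_prop)
  have hQA2 : ∫ ω, Q ω * A ω ^ 2 ∂P = (∫ ω, Q ω ∂P) * ∫ ω, A ω ^ 2 ∂P :=
    hfactor (φ := Prod.fst) (ψ := fun a => a ^ 2) (by fun_prop) (by fun_prop)
  have hLA2 : ∫ ω, (L ω * A ω) ^ 2 ∂P = (∫ ω, L ω ^ 2 ∂P) * ∫ ω, A ω ^ 2 ∂P := by
    simpa only [mul_pow] using
      hfactor (φ := fun p => p.2 ^ 2) (ψ := fun a => a ^ 2) (by fun_prop) (by fun_prop)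
  have hLA3 : ∫ ω, L ω * A ω * A ω ^ 2 ∂P = 0 := by
    simpa only [mul_assoc, ← pow_succ', hL0, zero_mul] using
      hfactor (φ := Prod.snd) (ψ := fun a => a ^ 3) (by fun_prop) (by fun_prop)
  have hA4 : ∫ ω, (A ω ^ 2) ^ 2 ∂P = ∫ ω, A ω ^ 4 ∂P := by simp only [← pow_mul]
  rw [hQLA, hQA2, hLA2, hLA3, hA4]
  ring

def quadSum (c : ℕ → ℕ → ℝ) (Y : ℕ → Ω → ℝ) (n : ℕ) (ω : Ω) : ℝ :=
  ∑ i ∈ range n, ∑ j ∈ range n, c i j * (Y i ω * Y j ω)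

variable {c : ℕ → ℕ → ℝ} {Y : ℕ → Ω → ℝ} {μ₂ μ₄ : ℝ}

theorem quadSum_sub (c d : ℕ → ℕ → ℝ) (Y : ℕ → Ω → ℝ) (n : ℕ) (ω : Ω) :
    quadSum c Y n ω - quadSum d Y n ω = quadSum (fun i j => c i j - d i j) Y n ω := by
  simp only [quadSum, ← sum_sub_distrib, sub_mul]

theorem sq_sum_mul_eq_quadSum (a : ℕ → ℝ) (Y : ℕ → Ω → ℝ) (n : ℕ) (ω : Ω) :
    (∑ i ∈ range n, a i * Y i ω) ^ 2 = quadSum (fun i j => a i * a j) Y n ω := by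
  simp only [quadSum, sq, sum_mul_sum]
  exact sum_congr rfl fun i _ => sum_congr rfl fun j _ => by ring

theorem quadSum_succ (hc : ∀ i j, c i j = c j i) (n : ℕ) (ω : Ω) :
    quadSum c Y (n + 1) ω = quadSum c Y n ω
      + 2 * ((∑ i ∈ range n, c i n * Y i ω) * Y n ω) + c n n * Y n ω ^ 2 := by
  simp only [quadSum, sum_range_succ, sum_add_distrib, sum_mul]
  simp only [hc n, mul_assoc, mul_comm (Y n ω) (Y _ ω)]
  ring

theorem measurable_quadSum {m : MeasurableSpace Ω} {n : ℕ} (hY : ∀ i < n, Measurable[m] (Y i)) :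
    Measurable[m] (quadSum c Y n) := by
  unfold quadSum
  refine Finset.measurable_sum _ fun i hi => Finset.measurable_sum _ fun j hj => ?_
  exact ((hY i (mem_range.1 hi)).mul (hY j (mem_range.1 hj))).const_mul _

theorem memLp_quadSum (hY : ∀ i, MemLp (Y i) 4 P) (n : ℕ) : MemLp (quadSum c Y n) 2 P :=
  memLp_finsetSum _ fun i _ => memLp_finsetSum _ fun j _ => ((hY j).mul' (hY i)).const_mul _

theorem integral_mul_eq_ite (hind : iIndepFun Y P) (hY : ∀ i, MemLp (Y i) 2 P)
    (h0 : ∀ i, ∫ ω, Y i ω ∂P = 0) (h2 : ∀ i, ∫ ω, Y i ω ^ 2 ∂P = μ₂) (i j : ℕ) :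
    ∫ ω, Y i ω * Y j ω ∂P = if i = j then μ₂ else 0 := by
  split_ifs with hij
  · simp only [hij, ← sq, h2]
  · change ∫ ω, (Y i * Y j) ω ∂P = 0
    rw [(hind.indepFun hij).integral_mul_eq_mul_integral (hY i).1 (hY j).1, h0, zero_mul]

theorem integral_quadSum (hind : iIndepFun Y P) (hY : ∀ i, MemLp (Y i) 2 P)
    (h0 : ∀ i, ∫ ω, Y i ω ∂P = 0) (h2 : ∀ i, ∫ ω, Y i ω ^ 2 ∂P = μ₂) (n : ℕ) :
    ∫ ω, quadSum c Y n ω ∂P = μ₂ * ∑ i ∈ range n, c i i := by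
  have hint : ∀ i j, Integrable (fun ω => c i j * (Y i ω * Y j ω)) P :=
    fun i j => ((hY i).integrable_mul (hY j)).const_mul _
  simp only [quadSum]
  rw [integral_finsetSum _ fun i _ => integrable_finsetSum _ fun j _ => hint i j]
  simp only [integral_finsetSum _ fun j _ => hint _ j, integral_const_mul,
    integral_mul_eq_ite hind hY h0 h2, mul_ite, mul_zero, sum_ite_eq, mem_range,
    sum_range_ite_lt le_rfl, mul_sum, mul_comm]

theorem sum_range_succ_sum_range_succ_sq (hc : ∀ i j, c i j = c j i) (n : ℕ) :
    ∑ i ∈ range (n + 1), ∑ j ∈ range (n + 1), c i j ^ 2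
      = ∑ i ∈ range n, ∑ j ∈ range n, c i j ^ 2 + 2 * ∑ i ∈ range n, c i n ^ 2 + c n n ^ 2 := by
  simp only [sum_range_succ, sum_add_distrib, hc n]
  ring

theorem integral_quadSum_sq (hY : ∀ i, Measurable (Y i)) (hind : iIndepFun Y P)
    (hY4 : ∀ i, MemLp (Y i) 4 P) (h0 : ∀ i, ∫ ω, Y i ω ∂P = 0)
    (h2 : ∀ i, ∫ ω, Y i ω ^ 2 ∂P = μ₂) (h4 : ∀ i, ∫ ω, Y i ω ^ 4 ∂P = μ₄)
    (hc : ∀ i j, c i j = c j i) (n : ℕ) :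
    ∫ ω, quadSum c Y n ω ^ 2 ∂P
      = (μ₄ - 3 * μ₂ ^ 2) * ∑ i ∈ range n, c i i ^ 2
        + μ₂ ^ 2 * ((∑ i ∈ range n, c i i) ^ 2 + 2 * ∑ i ∈ range n, ∑ j ∈ range n, c i j ^ 2) := by
  have := hind.isProbabilityMeasure
  have hY2 : ∀ i, MemLp (Y i) 2 P := fun i => (hY4 i).mono_exponent (by norm_num)
  induction n with
  | zero => simp [quadSum]
  | succ n ih =>
    set L : Ω → ℝ := fun ω => ∑ i ∈ range n, c i n * Y i ω
    have hpast : ∀ i < n, Measurable[⨆ k ∈ Set.Iio n, MeasurableSpace.comap (Y k) _] (Y i) :=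
      fun i hi => Measurable.of_comap_le
        (le_iSup₂ (f := fun k (_ : k ∈ Set.Iio n) => MeasurableSpace.comap (Y k) _) i hi)
    have hind_n : IndepFun (fun ω => (quadSum c Y n ω, L ω)) (Y n) P :=
      hind.indepFun_of_measurable_iSup hY (S := Set.Iio n) (lt_irrefl n) <|
        (measurable_quadSum hpast).prodMk <|
          Finset.measurable_sum _ fun i hi => (hpast i (mem_range.1 hi)).const_mul _
    have hL4 : MemLp L 4 P := memLp_finsetSum _ fun i _ => (hY4 i).const_mul _
    have hL0 : ∫ ω, L ω ∂P = 0 := by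
      simp [L, integral_finsetSum _ fun i _ => ((hY2 i).integrable one_le_two).const_mul _,
        integral_const_mul, h0]
    have hL2 : ∫ ω, L ω ^ 2 ∂P = μ₂ * ∑ i ∈ range n, c i n ^ 2 := by
      simp only [L, sq_sum_mul_eq_quadSum]
      rw [integral_quadSum hind hY2 h0 h2]
      simp only [sq]
    simp only [quadSum_succ hc]
    rw [integral_sq_add_mul_add_sq_of_indepFun _ (memLp_quadSum hY4 n) hL4 (hY4 n) hind_n hL0
      (h0 n), ih, hL2, h2, h4, integral_quadSum hind hY2 h0 h2,
      sum_range_succ_sum_range_succ_sq hc, sum_range_succ, sum_range_succ]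
    ring

theorem variance_quadSum (hY : ∀ i, Measurable (Y i)) (hind : iIndepFun Y P)
    (hY4 : ∀ i, MemLp (Y i) 4 P) (h0 : ∀ i, ∫ ω, Y i ω ∂P = 0)
    (h2 : ∀ i, ∫ ω, Y i ω ^ 2 ∂P = μ₂) (h4 : ∀ i, ∫ ω, Y i ω ^ 4 ∂P = μ₄)
    (hc : ∀ i j, c i j = c j i) (n : ℕ) :
    variance (quadSum c Y n) P
      = (μ₄ - 3 * μ₂ ^ 2) * ∑ i ∈ range n, c i i ^ 2
        + 2 * μ₂ ^ 2 * ∑ i ∈ range n, ∑ j ∈ range n, c i j ^ 2 := by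
  have := hind.isProbabilityMeasure
  rw [variance_eq_sub (memLp_quadSum hY4 n)]
  simp only [Pi.pow_apply]
  rw [integral_quadSum_sq hY hind hY4 h0 h2 h4 hc,
    integral_quadSum hind (fun i => (hY4 i).mono_exponent (by norm_num)) h0 h2]
  ring

end

theorem sum_sq_sub_mean_eq (x : ℕ → ℝ) (μ : ℝ) (S : ℕ) :
    ∑ t ∈ range S, (x t - (∑ s ∈ range S, x s) / S) ^ 2
      = ∑ i ∈ range S, ∑ j ∈ range S,
          ((if i = j then 1 else 0) - 1 / S) * ((x i - μ) * (x j - μ)) := by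
  rcases S.eq_zero_or_pos with rfl | hSpos
  · simp
  have hS : (S : ℝ) ≠ 0 := by positivity
  set y := fun i => x i - μ
  have hmean : (∑ s ∈ range S, x s) / S = (∑ s ∈ range S, y s) / S + μ := by
    simp only [y, sum_sub_distrib, sum_const, card_range, nsmul_eq_mul]
    field_simp
    ring
  have hL : ∑ t ∈ range S, (x t - (∑ s ∈ range S, x s) / S) ^ 2
      = ∑ t ∈ range S, y t ^ 2 - (∑ s ∈ range S, y s) ^ 2 / S := by
    have hdev : ∀ t, x t - (∑ s ∈ range S, x s) / S = y t - (∑ s ∈ range S, y s) / S :=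
      fun t => by rw [hmean]; ring
    simp only [hdev, sub_sq, sum_add_distrib, sum_sub_distrib, ← sum_mul, ← mul_sum, sum_const,
      card_range, nsmul_eq_mul]
    field_simp
    ring
  have hR : ∑ i ∈ range S, ∑ j ∈ range S, ((if i = j then 1 else 0) - 1 / S) * (y i * y j)
      = ∑ t ∈ range S, y t ^ 2 - (∑ s ∈ range S, y s) ^ 2 / S := by
    simp only [sub_mul, ite_mul, one_mul, zero_mul, sum_sub_distrib, sum_ite_eq, mem_range,
      sum_range_ite_lt le_rfl, sq, mul_one, ← mul_sum, ← sum_mul, div_eq_inv_mul]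
  exact hL.trans hR.symm

noncomputable def sampleVarCoef (S i j : ℕ) : ℝ :=
  if i < S ∧ j < S then ((if i = j then 1 else 0) - 1 / (S : ℝ)) / ((S : ℝ) - 1) else 0

theorem sampleVarCoef_comm (S i j : ℕ) : sampleVarCoef S i j = sampleVarCoef S j i := by
  simp only [sampleVarCoef, and_comm, eq_comm]

theorem sampleVarCoef_self {S : ℕ} (hS : S ≠ 1) (i : ℕ) :
    sampleVarCoef S i i = if i < S then 1 / (S : ℝ) else 0 := by
  have : (S : ℝ) - 1 ≠ 0 := sub_ne_zero.2 (mod_cast hS)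
  by_cases hi : i < S
  · have : (S : ℝ) ≠ 0 := Nat.cast_ne_zero.2 (by omega)
    simp only [sampleVarCoef, hi, and_self, if_true]
    field_simp
  · simp [sampleVarCoef, hi]

theorem sampleVar_eq_quadSum {Ω : Type*} (X : ℕ → Ω → ℝ) (μ : ℝ) {S m : ℕ} (h : S ≤ m)
    (ω : Ω) :
    (∑ t ∈ range S, (X t ω - (∑ s ∈ range S, X s ω) / S) ^ 2) / ((S : ℝ) - 1)
      = quadSum (sampleVarCoef S) (fun i ω => X i ω - μ) m ω := by
  rw [sum_sq_sub_mean_eq _ μ]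
  simp only [quadSum, sampleVarCoef, ite_mul, zero_mul, sum_range_sum_range_ite_lt h, sum_div]
  exact sum_congr rfl fun i _ => sum_congr rfl fun j _ => by ring

theorem sum_sampleVarCoef_mul {S R m : ℕ} (hS : 2 ≤ S) (hSR : S ≤ R) (hRm : R ≤ m) :
    ∑ i ∈ range m, ∑ j ∈ range m, sampleVarCoef S i j * sampleVarCoef R i j
      = 1 / ((R : ℝ) - 1) := by
  have h : ∀ i j, sampleVarCoef S i j * sampleVarCoef R i j = if i < S ∧ j < S then
      ((if i = j then 1 else 0) - 1 / (S : ℝ)) * ((if i = j then 1 else 0) - 1 / (R : ℝ))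
        / (((S : ℝ) - 1) * ((R : ℝ) - 1)) else 0 := by
    intro i j
    by_cases hij : i < S ∧ j < S
    · simp only [sampleVarCoef, hij, and_self, if_true,
        show i < R ∧ j < R from ⟨hij.1.trans_le hSR, hij.2.trans_le hSR⟩]
      exact div_mul_div_comm _ _ _ _
    · simp [sampleVarCoef, hij]
  have hS2 : (2 : ℝ) ≤ S := mod_cast hS
  have hR2 : (2 : ℝ) ≤ R := mod_cast hS.trans hSR
  have hS1 : (S : ℝ) - 1 ≠ 0 := by linarith
  have hR1 : (R : ℝ) - 1 ≠ 0 := by linarith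
  have hS0 : (S : ℝ) ≠ 0 := by linarith
  have hR0 : (R : ℝ) ≠ 0 := by linarith
  simp only [h, sum_range_sum_range_ite_lt (hSR.trans hRm), ← sum_div,
    sum_sum_ite_sub_mul_ite_sub]
  field_simp
  ring

theorem sum_sq_sampleVarCoef_sub_self {T' T : ℕ} (hT' : 2 ≤ T') (h : T' ≤ T) :
    ∑ i ∈ range T, (sampleVarCoef T i i - sampleVarCoef T' i i) ^ 2
      = 1 / (T' : ℝ) - 1 / T := by
  have hT'0 : (T' : ℝ) ≠ 0 := Nat.cast_ne_zero.2 (by omega)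
  have hT0 : (T : ℝ) ≠ 0 := Nat.cast_ne_zero.2 (by omega)
  have hpt : ∀ i ∈ range T, (sampleVarCoef T i i - sampleVarCoef T' i i) ^ 2
      = 1 / (T : ℝ) ^ 2 + if i < T' then 1 / (T' : ℝ) ^ 2 - 2 / (T * T') else 0 := by
    intro i hi
    rw [sampleVarCoef_self (by omega), sampleVarCoef_self (by omega), if_pos (mem_range.1 hi)]
    split_ifs <;> ring
  rw [sum_congr rfl hpt, sum_add_distrib, sum_range_ite_lt h]
  simp only [sum_const, card_range, nsmul_eq_mul]
  field_simp
  ring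

theorem sum_sq_sampleVarCoef_sub {T' T : ℕ} (hT' : 2 ≤ T') (h : T' ≤ T) :
    ∑ i ∈ range T, ∑ j ∈ range T, (sampleVarCoef T i j - sampleVarCoef T' i j) ^ 2
      = 1 / ((T' : ℝ) - 1) - 1 / ((T : ℝ) - 1) := by
  have hexpand : ∀ i j, (sampleVarCoef T i j - sampleVarCoef T' i j) ^ 2
      = sampleVarCoef T i j * sampleVarCoef T i j + sampleVarCoef T' i j * sampleVarCoef T' i j
        - 2 * (sampleVarCoef T' i j * sampleVarCoef T i j) := fun i j => by ring
  simp only [hexpand, sum_add_distrib, sum_sub_distrib, ← mul_sum]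
  rw [sum_sampleVarCoef_mul (hT'.trans h) le_rfl le_rfl, sum_sampleVarCoef_mul hT' h le_rfl,
    sum_sampleVarCoef_mul hT' le_rfl h]
  ring

/-- Variance of the coupled sample-variance increment for nested samples:
`Var[V(T) - V(T')] = (1/T' - 1/T)(μ₄ - 3μ₂²) + 2(1/(T'-1) - 1/(T-1)) μ₂²`. -/
theorem nested_sample_variance_increment_variance
    {Ω : Type*} [MeasureSpace Ω] [IsProbabilityMeasure (ℙ : Measure Ω)]
    (T' T : ℕ) (hT' : 2 ≤ T') (hTT : T' < T) (X : ℕ → Ω → ℝ)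
    (hmeas : ∀ i, Measurable (X i))
    (hindep : iIndepFun X ℙ)
    (hident : ∀ i, IdentDistrib (X i) (X 0) ℙ ℙ)
    (hL4 : ∀ i, MemLp (X i) 4 ℙ)
    (μ μ₂ μ₄ : ℝ) (hμ : μ = ∫ ω, X 0 ω)
    (hμ₂ : μ₂ = ∫ ω, (X 0 ω - μ) ^ 2)
    (hμ₄ : μ₄ = ∫ ω, (X 0 ω - μ) ^ 4)
    (V : ℕ → Ω → ℝ)
    (hV : ∀ S ω, V S ω
      = (∑ t ∈ range S, (X t ω - (∑ s ∈ range S, X s ω) / S) ^ 2) / ((S : ℝ) - 1)) :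
    variance (fun ω => V T ω - V T' ω) ℙ
      = (1 / (T' : ℝ) - 1 / (T : ℝ)) * (μ₄ - 3 * μ₂ ^ 2)
        + 2 * (1 / ((T' : ℝ) - 1) - 1 / ((T : ℝ) - 1)) * μ₂ ^ 2 := by
  set Y : ℕ → Ω → ℝ := fun i ω => X i ω - μ
  have hmoment : ∀ k i, ∫ ω, Y i ω ^ k = ∫ ω, (X 0 ω - μ) ^ k := fun k i =>
    ((hident i).comp ((measurable_id.sub_const μ).pow_const k)).integral_eq
  have hY0 : ∀ i, ∫ ω, Y i ω = 0 := fun i => by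
    simpa [integral_sub ((hL4 0).integrable (by norm_num)) (integrable_const μ), ← hμ]
      using hmoment 1 i
  have hD : (fun ω => V T ω - V T' ω)
      = quadSum (fun i j => sampleVarCoef T i j - sampleVarCoef T' i j) Y T := by
    funext ω
    rw [hV, hV, sampleVar_eq_quadSum X μ le_rfl, sampleVar_eq_quadSum X μ hTT.le, quadSum_sub]
  rw [hD, variance_quadSum (fun i => (hmeas i).sub_const μ)
      (hindep.comp _ fun _ => measurable_id.sub_const μ) (fun i => (hL4 i).sub (memLp_const μ))
      hY0 (fun i => (hmoment 2 i).trans hμ₂.symm) (fun i => (hmoment 4 i).trans hμ₄.symm)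
      (fun i j => by rw [sampleVarCoef_comm T, sampleVarCoef_comm T']),
    sum_sq_sampleVarCoef_sub_self hT' hTT.le, sum_sq_sampleVarCoef_sub hT' hTT.le]
  ring
end

section
/- (Variance of the MLMC mean estimator.) With the telescoping estimator 𝒴 of the previous setup, built from independent outer replicates of Y(T_0) and of the nested increments ΔY(T_ℓ) from i.i.d. variables with variance μ₂, Var[𝒴] = μ₂ ( 1/(M_0 T_0) + ∑_{ℓ=1}^L (1/M_ℓ)(1/T_{ℓ-1} - 1/T_ℓ) ). -/
/-!
The estimator is a linear combination `∑ c_p X_p` of the independent inner samples: in a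
replicate of level `ℓ ≥ 1` the first `T_{ℓ-1}` samples carry weight
`(1/T_ℓ - 1/T_{ℓ-1}) / M_ℓ` and the remaining ones `1 / (T_ℓ M_ℓ)`. Hence
`Var[𝒴] = μ₂ ∑ c_p²`, and the squared weights of one replicate sum to
`T_{ℓ-1} (1/T_ℓ - 1/T_{ℓ-1})² + (T_ℓ - T_{ℓ-1}) / T_ℓ² = 1/T_{ℓ-1} - 1/T_ℓ`.
-/

open MeasureTheory ProbabilityTheory Finset

/-- Sample mean of the first `S` inner samples of replicate `m` at level `ℓ`. -/
noncomputable def levelMean {Ω : Type*} (X : ℕ → ℕ → ℕ → Ω → ℝ) (ℓ m S : ℕ) (ω : Ω) : ℝ :=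
  (∑ t ∈ Finset.range S, X ℓ m t ω) / S

/-- The weight of sample `t` in `Ȳ(T) - Ȳ(S)` when `Ȳ(S)` reuses the first `S` of the `T`
samples. -/
noncomputable def nestedWeight (S T t : ℕ) : ℝ := 1 / (T : ℝ) - if t < S then 1 / (S : ℝ) else 0

lemma sum_range_div_sub_sum_range_div {S T : ℕ} (hST : S ≤ T) (a : ℕ → ℝ) :
    (∑ t ∈ range T, a t) / T - (∑ t ∈ range S, a t) / S
      = ∑ t ∈ range T, nestedWeight S T t * a t := by
  have hfilter : (range T).filter (· < S) = range S := by
    ext t; simp only [mem_filter, mem_range]; omega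
  simp only [nestedWeight, sub_mul, sum_sub_distrib, ite_mul, zero_mul, ← sum_filter, hfilter,
    ← mul_sum]
  ring

lemma sum_range_nestedWeight_sq {S T : ℕ} (hS : 0 < S) (hST : S ≤ T) :
    ∑ t ∈ range T, nestedWeight S T t ^ 2 = 1 / S - 1 / T := by
  rw [← sum_range_add_sum_Ico _ hST]
  have hT : 0 < T := hS.trans_le hST
  have h_lt : ∀ t ∈ range S, nestedWeight S T t ^ 2 = (1 / T - 1 / S) ^ 2 := fun t ht => by
    rw [nestedWeight, if_pos (mem_range.1 ht)]
  have h_ge : ∀ t ∈ Ico S T, nestedWeight S T t ^ 2 = (1 / T) ^ 2 := fun t ht => by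
    rw [nestedWeight, if_neg (mem_Ico.1 ht).1.not_gt, sub_zero]
  rw [sum_congr rfl h_lt, sum_congr rfl h_ge]
  simp only [sum_const, card_range, Nat.card_Ico, nsmul_eq_mul, Nat.cast_sub hST]
  field_simp
  ring

lemma sum_range_nestedWeight_zero_sq (T : ℕ) :
    ∑ t ∈ range T, nestedWeight 0 T t ^ 2 = 1 / T := by
  rcases eq_or_ne T 0 with rfl | hT
  · simp
  · simp only [nestedWeight, Nat.not_lt_zero, if_false, sub_zero, sum_const, card_range,
      nsmul_eq_mul]
    field_simp

theorem IndepFun.variance_sum_const_mul {ι Ω : Type*} [MeasurableSpace Ω] {μ : Measure Ω}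
    {X : ι → Ω → ℝ} {s : Finset ι} (c : ι → ℝ) (hX : ∀ i ∈ s, MemLp (X i) 2 μ)
    (hindep : Set.Pairwise ↑s fun i j => X i ⟂ᵢ[μ] X j) {v : ℝ}
    (hv : ∀ i ∈ s, Var[X i; μ] = v) :
    Var[fun ω => ∑ i ∈ s, c i * X i ω; μ] = v * ∑ i ∈ s, c i ^ 2 := by
  have := IndepFun.variance_sum (X := fun i ω => c i * X i ω) (s := s)
    (fun i hi => (hX i hi).const_mul (c i))
    fun i hi j hj hij =>
      (hindep hi hj hij).comp (measurable_const_mul (c i)) (measurable_const_mul (c j))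
  rw [Finset.sum_fn] at this
  rw [this, mul_sum]
  exact sum_congr rfl fun i hi => by rw [variance_const_mul, hv i hi, mul_comm]

def sampleIndices (s : Finset ℕ) (M T : ℕ → ℕ) : Finset (ℕ × ℕ × ℕ) :=
  s.biUnion fun ℓ => {ℓ} ×ˢ (range (M ℓ) ×ˢ range (T ℓ))

lemma sum_sampleIndices {β : Type*} [AddCommMonoid β] (s : Finset ℕ) (M T : ℕ → ℕ)
    (f : ℕ × ℕ × ℕ → β) :
    ∑ p ∈ sampleIndices s M T, f p
      = ∑ ℓ ∈ s, ∑ m ∈ range (M ℓ), ∑ t ∈ range (T ℓ), f (ℓ, m, t) := by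
  rw [sum_finset_product _ s fun ℓ => range (M ℓ) ×ˢ range (T ℓ)]
  · simp only [sum_product]
  · rintro ⟨ℓ, m, t⟩
    simp [sampleIndices, and_comm]

lemma sum_levelMean_sub_div {Ω : Type*} (X : ℕ → ℕ → ℕ → Ω → ℝ) (ℓ M : ℕ) {S T : ℕ}
    (hST : S ≤ T) (ω : Ω) :
    (∑ m ∈ range M, (levelMean X ℓ m T ω - levelMean X ℓ m S ω)) / M
      = ∑ m ∈ range M, ∑ t ∈ range T, nestedWeight S T t / M * X ℓ m t ω := by
  simp only [levelMean, sum_range_div_sub_sum_range_div hST, div_mul_eq_mul_div,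
    ← sum_div]

theorem variance_sum_levelMean_sub {Ω : Type*} [MeasurableSpace Ω] {μ : Measure Ω}
    (s : Finset ℕ) (M S T : ℕ → ℕ) (hST : ∀ ℓ ∈ s, S ℓ ≤ T ℓ) (X : ℕ → ℕ → ℕ → Ω → ℝ)
    (hindep : Pairwise fun p q : ℕ × ℕ × ℕ => X p.1 p.2.1 p.2.2 ⟂ᵢ[μ] X q.1 q.2.1 q.2.2)
    (hL2 : ∀ ℓ m t, MemLp (X ℓ m t) 2 μ) {v : ℝ} (hv : ∀ ℓ m t, Var[X ℓ m t; μ] = v) :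
    Var[fun ω => ∑ ℓ ∈ s,
        (∑ m ∈ range (M ℓ), (levelMean X ℓ m (T ℓ) ω - levelMean X ℓ m (S ℓ) ω)) / M ℓ; μ]
      = v * ∑ ℓ ∈ s, 1 / (M ℓ : ℝ) * ∑ t ∈ range (T ℓ), nestedWeight (S ℓ) (T ℓ) t ^ 2 := by
  set c : ℕ × ℕ × ℕ → ℝ := fun p => nestedWeight (S p.1) (T p.1) p.2.2 / M p.1
  have hlin : (fun ω => ∑ ℓ ∈ s,
        (∑ m ∈ range (M ℓ), (levelMean X ℓ m (T ℓ) ω - levelMean X ℓ m (S ℓ) ω)) / M ℓ)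
      = fun ω => ∑ p ∈ sampleIndices s M T, c p * X p.1 p.2.1 p.2.2 ω := by
    funext ω
    rw [sum_sampleIndices]
    exact sum_congr rfl fun ℓ hℓ => sum_levelMean_sub_div X ℓ (M ℓ) (hST ℓ hℓ) ω
  rw [hlin, IndepFun.variance_sum_const_mul c (fun p _ => hL2 _ _ _)
    (fun p _ q _ hpq => hindep hpq) (fun p _ => hv _ _ _), sum_sampleIndices]
  congr 1
  refine sum_congr rfl fun ℓ _ => ?_
  simp only [c, div_pow, ← sum_div, sum_const, card_range, nsmul_eq_mul]
  rcases eq_or_ne (M ℓ) 0 with h | h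
  · simp [h]
  · field_simp

/-- The coarser fidelity paired with level `ℓ`; level `0` is paired with the empty sample mean
`levelMean X 0 m 0 = 0`. -/
def prevFidelity (T : ℕ → ℕ) (ℓ : ℕ) : ℕ := if ℓ = 0 then 0 else T (ℓ - 1)

@[simp]
lemma prevFidelity_zero (T : ℕ → ℕ) : prevFidelity T 0 = 0 := if_pos rfl

lemma prevFidelity_of_mem_Icc (T : ℕ → ℕ) {L ℓ : ℕ} (hℓ : ℓ ∈ Icc 1 L) :
    prevFidelity T ℓ = T (ℓ - 1) :=
  if_neg (by grind)

lemma monotoneOn_Iic_of_lt_succ {T : ℕ → ℕ} {L : ℕ} (hTmono : ∀ ℓ < L, T ℓ < T (ℓ + 1)) :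
    MonotoneOn T (Set.Iic L) :=
  (strictMonoOn_Iic_of_lt_succ fun ℓ hℓ => by simpa using hTmono ℓ hℓ).monotoneOn

lemma prevFidelity_le {T : ℕ → ℕ} {L ℓ : ℕ} (hTmono : ∀ ℓ < L, T ℓ < T (ℓ + 1)) (hℓ : ℓ ≤ L) :
    prevFidelity T ℓ ≤ T ℓ := by
  unfold prevFidelity
  split_ifs
  · exact Nat.zero_le _
  · exact monotoneOn_Iic_of_lt_succ hTmono (Set.mem_Iic.2 (by omega)) hℓ (Nat.sub_le ℓ 1)

lemma prevFidelity_pos {T : ℕ → ℕ} {L ℓ : ℕ} (hTmono : ∀ ℓ < L, T ℓ < T (ℓ + 1))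
    (hT0 : 1 ≤ T 0) (hℓ : ℓ ∈ Icc 1 L) : 0 < prevFidelity T ℓ := by
  rw [prevFidelity_of_mem_Icc T hℓ]
  exact hT0.trans <| monotoneOn_Iic_of_lt_succ hTmono (Set.mem_Iic.2 (Nat.zero_le L))
    (Set.mem_Iic.2 (by grind)) (Nat.zero_le _)

lemma range_succ_eq_insert_zero_Icc (L : ℕ) : range (L + 1) = insert 0 (Icc 1 L) := by
  ext ℓ
  simp only [mem_range, mem_insert, mem_Icc]
  omega

lemma mlmc_estimator_eq_sum_levels {Ω : Type*} (X : ℕ → ℕ → ℕ → Ω → ℝ) (L : ℕ) (T M : ℕ → ℕ)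
    (ω : Ω) :
    (∑ m ∈ range (M 0), levelMean X 0 m (T 0) ω) / (M 0)
        + ∑ ℓ ∈ Icc 1 L, (∑ m ∈ range (M ℓ),
            (levelMean X ℓ m (T ℓ) ω - levelMean X ℓ m (T (ℓ - 1)) ω)) / (M ℓ)
      = ∑ ℓ ∈ range (L + 1), (∑ m ∈ range (M ℓ),
            (levelMean X ℓ m (T ℓ) ω - levelMean X ℓ m (prevFidelity T ℓ) ω)) / M ℓ := by
  rw [range_succ_eq_insert_zero_Icc, sum_insert (by simp)]
  congr 1
  · simp [levelMean]
  · exact sum_congr rfl fun ℓ hℓ => by rw [prevFidelity_of_mem_Icc T hℓ]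

theorem mlmc_mean_estimator_variance_general
    {Ω : Type*} [MeasureSpace Ω]
    (L : ℕ) (T M : ℕ → ℕ)
    (hT0 : 1 ≤ T 0) (hTmono : ∀ ℓ < L, T ℓ < T (ℓ + 1))
    (X : ℕ → ℕ → ℕ → Ω → ℝ)
    (hindep : iIndepFun
      (fun p : ℕ × ℕ × ℕ => X p.1 p.2.1 p.2.2) ℙ)
    (hident : ∀ ℓ m t, IdentDistrib (X ℓ m t) (X 0 0 0) ℙ ℙ)
    (hL2 : ∀ ℓ m t, MemLp (X ℓ m t) 2 ℙ)
    (μ₂ : ℝ) (hμ₂ : μ₂ = variance (X 0 0 0) ℙ) :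
    variance (fun ω => (∑ m ∈ range (M 0), levelMean X 0 m (T 0) ω) / (M 0)
        + ∑ ℓ ∈ Icc 1 L, (∑ m ∈ range (M ℓ),
            (levelMean X ℓ m (T ℓ) ω - levelMean X ℓ m (T (ℓ - 1)) ω)) / (M ℓ)) ℙ
      = μ₂ * (1 / ((M 0 : ℝ) * T 0)
          + ∑ ℓ ∈ Icc 1 L, (1 / (M ℓ : ℝ)) * (1 / (T (ℓ - 1) : ℝ) - 1 / (T ℓ : ℝ))) := by
  have hv : ∀ ℓ m t, Var[X ℓ m t; ℙ] = μ₂ := fun ℓ m t =>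
    (hident ℓ m t).variance_eq.trans hμ₂.symm
  have hle : ∀ ℓ ∈ range (L + 1), prevFidelity T ℓ ≤ T ℓ := fun ℓ hℓ =>
    prevFidelity_le hTmono (Nat.lt_succ_iff.1 (mem_range.1 hℓ))
  rw [funext (mlmc_estimator_eq_sum_levels X L T M),
    variance_sum_levelMean_sub _ M _ T hle X (fun p q hpq => hindep.indepFun hpq) hL2 hv,
    range_succ_eq_insert_zero_Icc, sum_insert (by simp), prevFidelity_zero,
    sum_range_nestedWeight_zero_sq, one_div_mul_one_div]
  congr 2
  refine sum_congr rfl fun ℓ hℓ => ?_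
  rw [sum_range_nestedWeight_sq (prevFidelity_pos hTmono hT0 hℓ)
    (prevFidelity_le hTmono (mem_Icc.1 hℓ).2), prevFidelity_of_mem_Icc T hℓ]

/-- Variance of the telescoping MLMC mean estimator:
`Var[𝒴] = μ₂ (1/(M₀T₀) + ∑_ℓ (1/M_ℓ)(1/T_{ℓ-1} - 1/T_ℓ))`. -/
theorem mlmc_mean_estimator_variance
    {Ω : Type*} [MeasureSpace Ω] [IsProbabilityMeasure (ℙ : Measure Ω)]
    (L : ℕ) (T M : ℕ → ℕ)
    (hT0 : 1 ≤ T 0) (hTmono : ∀ ℓ < L, T ℓ < T (ℓ + 1)) (hM : ∀ ℓ ≤ L, 1 ≤ M ℓ)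
    (X : ℕ → ℕ → ℕ → Ω → ℝ)
    (hmeas : ∀ ℓ m t, Measurable (X ℓ m t))
    (hindep : iIndepFun
      (fun p : ℕ × ℕ × ℕ => X p.1 p.2.1 p.2.2) ℙ)
    (hident : ∀ ℓ m t, IdentDistrib (X ℓ m t) (X 0 0 0) ℙ ℙ)
    (hL2 : ∀ ℓ m t, MemLp (X ℓ m t) 2 ℙ)
    (μ₂ : ℝ) (hμ₂ : μ₂ = variance (X 0 0 0) ℙ) :
    variance (fun ω => (∑ m ∈ range (M 0), levelMean X 0 m (T 0) ω) / (M 0)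
        + ∑ ℓ ∈ Icc 1 L, (∑ m ∈ range (M ℓ),
            (levelMean X ℓ m (T ℓ) ω - levelMean X ℓ m (T (ℓ - 1)) ω)) / (M ℓ)) ℙ
      = μ₂ * (1 / ((M 0 : ℝ) * T 0)
          + ∑ ℓ ∈ Icc 1 L, (1 / (M ℓ : ℝ)) * (1 / (T (ℓ - 1) : ℝ) - 1 / (T ℓ : ℝ))) :=
  mlmc_mean_estimator_variance_general L T M hT0 hTmono X hindep hident hL2 μ₂ hμ₂
end

section
/- (Variance of the MLMC variance estimator.) In the setting of the MLMC variance estimator with independent outer replicates, Var[𝒱] = (1/(M_0 T_0))(μ₄ - ((T_0-3)/(T_0-1)) μ₂²) + ∑_{ℓ=1}^L (1/M_ℓ)(1/T_{ℓ-1} - 1/T_ℓ)(μ₄ - 3μ₂²) + ∑_{ℓ=1}^L (2/M_ℓ)(1/(T_{ℓ-1}-1) - 1/(T_ℓ-1)) μ₂². -/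
open MeasureTheory ProbabilityTheory Finset

/-- Unbiased sample variance of the first `S` inner samples of replicate `m` at level `ℓ`. -/
noncomputable def levelVar {Ω : Type*} (X : ℕ → ℕ → ℕ → Ω → ℝ) (ℓ m S : ℕ) (ω : Ω) : ℝ :=
  (∑ t ∈ Finset.range S, (X ℓ m t ω - levelMean X ℓ m S ω) ^ 2) / ((S : ℝ) - 1)

/-!
After centring, the unbiased sample variance over an index set `s` of size `n` is the
U-statistic `V_s = (∑_{i ∈ s} Z_i²) / n - (∑_{i ≠ j ∈ s} Z_i Z_j) / (n (n - 1))`.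
By independence the squares `Z_i²` and the products `Z_i Z_j` (`i ≠ j`) are uncorrelated except
when their indices coincide, so `cov(V_s, V_t)` depends only on `#s`, `#t` and `#(s ∩ t)`.
Sample variances over disjoint blocks are therefore uncorrelated, and the variance of the
estimator splits over levels and replicates; for nested blocks `s ⊆ t` one gets
`cov(V_s, V_t) = Var V_t`, hence `Var (V_t - V_s) = Var V_s - Var V_t`.
-/

noncomputable def sampleVariance {ι : Type*} (s : Finset ι) (x : ι → ℝ) : ℝ :=
  (∑ i ∈ s, (x i - (∑ j ∈ s, x j) / #s) ^ 2) / (#s - 1)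

section SampleVariance

variable {ι : Type*} {s : Finset ι} (x : ι → ℝ)

lemma sampleVariance_sub_const (c : ℝ) :
    sampleVariance s (fun i => x i - c) = sampleVariance s x := by
  rcases s.eq_empty_or_nonempty with rfl | hs
  · simp [sampleVariance]
  have hs0 : (#s : ℝ) ≠ 0 := by exact_mod_cast hs.card_pos.ne'
  have hmean : (∑ j ∈ s, (x j - c)) / #s = (∑ j ∈ s, x j) / #s - c := by
    rw [sum_sub_distrib, sum_const, nsmul_eq_mul]
    field_simp
  simp only [sampleVariance, hmean, sub_sub_sub_cancel_right]

lemma sampleVariance_of_card_lt_two (hs : #s < 2) : sampleVariance s x = 0 := by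
  obtain h | h : #s = 0 ∨ #s = 1 := by omega
  · simp [sampleVariance, card_eq_zero.1 h]
  · simp [sampleVariance, h]

lemma sq_sum_eq_sum_sq_add_sum_offDiag [DecidableEq ι] :
    (∑ i ∈ s, x i) ^ 2 = ∑ i ∈ s, x i ^ 2 + ∑ p ∈ s.offDiag, x p.1 * x p.2 := by
  rw [sq, sum_mul_sum, ← sum_product', ← diag_union_offDiag, sum_union (disjoint_diag_offDiag s),
    sum_diag]
  simp only [sq]

lemma cast_card_sub_one_ne_zero (hs : 2 ≤ #s) : (#s : ℝ) - 1 ≠ 0 := by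
  have : (2 : ℝ) ≤ #s := by exact_mod_cast hs
  linarith

lemma sampleVariance_eq_sum_sq_sub_sum_offDiag [DecidableEq ι] (hs : 2 ≤ #s) :
    sampleVariance s x
      = (∑ i ∈ s, x i ^ 2) / #s - (∑ p ∈ s.offDiag, x p.1 * x p.2) / (#s * (#s - 1)) := by
  have hs0 : (#s : ℝ) ≠ 0 := by positivity
  have hs1 := cast_card_sub_one_ne_zero hs
  have hdev : ∑ i ∈ s, (x i - (∑ j ∈ s, x j) / #s) ^ 2
      = ∑ i ∈ s, x i ^ 2 - (∑ i ∈ s, x i) ^ 2 / #s := by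
    simp only [sub_sq, sum_add_distrib, sum_sub_distrib, ← sum_mul, ← mul_sum, sum_const,
      nsmul_eq_mul]
    field_simp
    ring
  rw [sampleVariance, hdev, sq_sum_eq_sum_sq_add_sum_offDiag]
  field_simp
  ring

end SampleVariance

section Moments

variable {Ω ι : Type*} {mΩ : MeasurableSpace Ω} {μ : Measure Ω} {Z : ι → Ω → ℝ}

lemma MeasureTheory.MemLp.mul_of_four {f g : Ω → ℝ} (hf : MemLp f 4 μ) (hg : MemLp g 4 μ) :
    MemLp (fun ω => f ω * g ω) 2 μ := by
  have : ENNReal.HolderTriple 4 4 2 := ⟨by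
    rw [← two_mul, show (4 : ENNReal) = 2 * 2 by norm_num, ENNReal.mul_inv (by simp) (by simp),
      ← mul_assoc, ENNReal.mul_inv_cancel (by simp) (by simp), one_mul]⟩
  exact hg.mul' hf

lemma MeasureTheory.MemLp.sq_of_four {f : Ω → ℝ} (hf : MemLp f 4 μ) :
    MemLp (fun ω => f ω ^ 2) 2 μ := by
  simpa only [sq] using hf.mul_of_four hf

lemma memLp_sampleVariance (hL4 : ∀ i, MemLp (Z i) 4 μ) (s : Finset ι) :
    MemLp (fun ω => sampleVariance s (Z · ω)) 2 μ := by
  have hmean : MemLp (fun ω => (∑ j ∈ s, Z j ω) / #s) 4 μ := by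
    simpa only [div_eq_mul_inv] using (memLp_finsetSum s fun j _ => hL4 j).mul_const _
  have hdev : ∀ i, MemLp (fun ω => Z i ω - (∑ j ∈ s, Z j ω) / #s) 4 μ := fun i =>
    (hL4 i).sub hmean
  simpa only [sampleVariance, div_eq_mul_inv] using
    (memLp_finsetSum s fun i _ => (hdev i).sq_of_four).mul_const _

lemma ProbabilityTheory.iIndepFun.integral_mul_eq_zero_of_ne (hind : iIndepFun Z μ)
    (hmeas : ∀ i, AEStronglyMeasurable (Z i) μ) {a b : ι} (ha : μ[Z a] = 0) (hab : a ≠ b) :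
    ∫ ω, Z a ω * Z b ω ∂μ = 0 := by
  rw [(hind.indepFun hab).integral_fun_mul_eq_mul_integral (hmeas a) (hmeas b), ha, zero_mul]

lemma ProbabilityTheory.iIndepFun.integral_mul_mul_mul_eq_zero_of_ne [DecidableEq ι]
    (hind : iIndepFun Z μ) (hmeas : ∀ i, AEStronglyMeasurable (Z i) μ) {a : ι} (ha : μ[Z a] = 0)
    {b c d : ι} (hb : a ≠ b) (hc : a ≠ c) (hd : a ≠ d) :
    ∫ ω, Z a ω * (Z b ω * Z c ω * Z d ω) ∂μ = 0 := by
  have hdisj : Disjoint ({a} : Finset ι) {b, c, d} := by simp [hb, hc, hd]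
  have h : IndepFun (Z a) (fun ω => Z b ω * Z c ω * Z d ω) μ := by
    exact (hind.indepFun_finset₀ _ _ hdisj fun i => (hmeas i).aemeasurable).comp
      (measurable_pi_apply ⟨a, mem_singleton_self a⟩)
      (by fun_prop : Measurable fun v : ({b, c, d} : Finset ι) → ℝ =>
        v ⟨b, mem_insert_self b _⟩ * v ⟨c, mem_insert_of_mem (mem_insert_self c _)⟩ *
          v ⟨d, mem_insert_of_mem (mem_insert_of_mem (mem_singleton_self d))⟩)
  rw [h.integral_fun_mul_eq_mul_integral (hmeas a) (((hmeas b).mul (hmeas c)).mul (hmeas d)), ha,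
    zero_mul]

lemma ProbabilityTheory.iIndepFun.integral_sq_mul_sq_of_ne (hind : iIndepFun Z μ)
    (hmeas : ∀ i, AEStronglyMeasurable (Z i) μ) {a b : ι} (hab : a ≠ b) :
    ∫ ω, Z a ω ^ 2 * Z b ω ^ 2 ∂μ = (∫ ω, Z a ω ^ 2 ∂μ) * ∫ ω, Z b ω ^ 2 ∂μ := by
  have h : IndepFun (fun ω => Z a ω ^ 2) (fun ω => Z b ω ^ 2) μ :=
    (hind.indepFun hab).comp (measurable_id.pow_const 2) (measurable_id.pow_const 2)
  exact h.integral_fun_mul_eq_mul_integral ((hmeas a).pow 2) ((hmeas b).pow 2)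

variable [IsProbabilityMeasure μ] {σ2 κ : ℝ}

lemma ProbabilityTheory.iIndepFun.covariance_sq_sq [DecidableEq ι] (hind : iIndepFun Z μ)
    (hL4 : ∀ i, MemLp (Z i) 4 μ) (h2 : ∀ i, ∫ ω, Z i ω ^ 2 ∂μ = σ2)
    (h4 : ∀ i, ∫ ω, Z i ω ^ 4 ∂μ = κ) (i k : ι) :
    cov[fun ω => Z i ω ^ 2, fun ω => Z k ω ^ 2; μ] = if i = k then κ - σ2 ^ 2 else 0 := by
  rw [covariance_eq_sub (hL4 i).sq_of_four (hL4 k).sq_of_four, h2, h2]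
  split_ifs with hik
  · subst hik
    simp only [Pi.mul_apply, ← pow_add, h4]
    ring
  · simp only [Pi.mul_apply, hind.integral_sq_mul_sq_of_ne (fun i => (hL4 i).1) hik, h2]
    ring

lemma ProbabilityTheory.iIndepFun.covariance_sq_mul_eq_zero [DecidableEq ι]
    (hind : iIndepFun Z μ) (hL4 : ∀ i, MemLp (Z i) 4 μ) (h0 : ∀ i, μ[Z i] = 0) (i : ι)
    {k l : ι} (hkl : k ≠ l) :
    cov[fun ω => Z i ω ^ 2, fun ω => Z k ω * Z l ω; μ] = 0 := by
  have hmeas := fun i => (hL4 i).1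
  rw [covariance_eq_sub (hL4 i).sq_of_four ((hL4 k).mul_of_four (hL4 l)),
    hind.integral_mul_eq_zero_of_ne hmeas (h0 k) hkl, mul_zero, sub_zero]
  simp only [Pi.mul_apply]
  by_cases hki : k = i
  · subst hki
    calc ∫ ω, Z k ω ^ 2 * (Z k ω * Z l ω) ∂μ = ∫ ω, Z l ω * (Z k ω * Z k ω * Z k ω) ∂μ := by
          congr 1; ext ω; ring
      _ = 0 := hind.integral_mul_mul_mul_eq_zero_of_ne hmeas (h0 l) hkl.symm hkl.symm hkl.symm
  · calc ∫ ω, Z i ω ^ 2 * (Z k ω * Z l ω) ∂μ = ∫ ω, Z k ω * (Z i ω * Z i ω * Z l ω) ∂μ := by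
          congr 1; ext ω; ring
      _ = 0 := hind.integral_mul_mul_mul_eq_zero_of_ne hmeas (h0 k) hki hki hkl

lemma ProbabilityTheory.iIndepFun.covariance_mul_mul [DecidableEq ι] (hind : iIndepFun Z μ)
    (hL4 : ∀ i, MemLp (Z i) 4 μ) (h0 : ∀ i, μ[Z i] = 0) (h2 : ∀ i, ∫ ω, Z i ω ^ 2 ∂μ = σ2)
    {p q : ι × ι} (hp : p.1 ≠ p.2) (hq : q.1 ≠ q.2) :
    cov[fun ω => Z p.1 ω * Z p.2 ω, fun ω => Z q.1 ω * Z q.2 ω; μ]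
      = (if q = p then σ2 ^ 2 else 0) + (if q = p.swap then σ2 ^ 2 else 0) := by
  obtain ⟨i, j⟩ := p
  obtain ⟨k, l⟩ := q
  dsimp only at hp hq ⊢
  have hmeas := fun i => (hL4 i).1
  rw [covariance_eq_sub ((hL4 i).mul_of_four (hL4 j)) ((hL4 k).mul_of_four (hL4 l)),
    hind.integral_mul_eq_zero_of_ne hmeas (h0 k) hq, mul_zero, sub_zero]
  simp only [Pi.mul_apply, Prod.swap_prod_mk, Prod.mk.injEq]
  have hij : ∫ ω, Z i ω * Z j ω * (Z i ω * Z j ω) ∂μ = σ2 ^ 2 := by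
    simp_rw [show ∀ ω, Z i ω * Z j ω * (Z i ω * Z j ω) = Z i ω ^ 2 * Z j ω ^ 2 from
      fun ω => by ring]
    rw [hind.integral_sq_mul_sq_of_ne hmeas hp, h2, h2, sq]
  -- unless `{k, l} = {i, j}`, some index occurs only once and the moment vanishes
  by_cases hk : k = i ∨ k = j
  swap
  · obtain ⟨hki, hkj⟩ := not_or.1 hk
    calc ∫ ω, Z i ω * Z j ω * (Z k ω * Z l ω) ∂μ = ∫ ω, Z k ω * (Z i ω * Z j ω * Z l ω) ∂μ := by
          congr 1; ext ω; ring
      _ = 0 := hind.integral_mul_mul_mul_eq_zero_of_ne hmeas (h0 k) hki hkj hq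
      _ = _ := by simp [hki, hkj]
  by_cases hl : l = i ∨ l = j
  swap
  · obtain ⟨hli, hlj⟩ := not_or.1 hl
    calc ∫ ω, Z i ω * Z j ω * (Z k ω * Z l ω) ∂μ = ∫ ω, Z l ω * (Z i ω * Z j ω * Z k ω) ∂μ := by
          congr 1; ext ω; ring
      _ = 0 := hind.integral_mul_mul_mul_eq_zero_of_ne hmeas (h0 l) hli hlj hq.symm
      _ = _ := by simp [hli, hlj]
  rcases hk with rfl | rfl <;> rcases hl with rfl | rfl
  · exact absurd rfl hq
  · simp [hij, hp]
  · rw [← hij]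
    simp only [hp.symm, and_self, if_true, false_and, if_false, zero_add]
    congr 1; ext ω; ring
  · exact absurd rfl hq

lemma ProbabilityTheory.iIndepFun.covariance_sum_sq_sum_sq [DecidableEq ι]
    (hind : iIndepFun Z μ) (hL4 : ∀ i, MemLp (Z i) 4 μ) (h2 : ∀ i, ∫ ω, Z i ω ^ 2 ∂μ = σ2)
    (h4 : ∀ i, ∫ ω, Z i ω ^ 4 ∂μ = κ) (s t : Finset ι) :
    cov[fun ω => ∑ i ∈ s, Z i ω ^ 2, fun ω => ∑ k ∈ t, Z k ω ^ 2; μ]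
      = #(s ∩ t) * (κ - σ2 ^ 2) := by
  rw [covariance_fun_sum_fun_sum' (fun i _ => (hL4 i).sq_of_four)
    (fun k _ => (hL4 k).sq_of_four)]
  simp only [hind.covariance_sq_sq hL4 h2 h4, sum_ite_eq, sum_ite_mem, sum_const, nsmul_eq_mul]

lemma ProbabilityTheory.iIndepFun.covariance_sum_sq_sum_offDiag [DecidableEq ι]
    (hind : iIndepFun Z μ) (hL4 : ∀ i, MemLp (Z i) 4 μ) (h0 : ∀ i, μ[Z i] = 0)
    (s t : Finset ι) :
    cov[fun ω => ∑ i ∈ s, Z i ω ^ 2, fun ω => ∑ q ∈ t.offDiag, Z q.1 ω * Z q.2 ω; μ] = 0 := by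
  rw [covariance_fun_sum_fun_sum' (fun i _ => (hL4 i).sq_of_four)
    (fun q _ => (hL4 q.1).mul_of_four (hL4 q.2))]
  refine sum_eq_zero fun i _ => sum_eq_zero fun q hq => ?_
  exact hind.covariance_sq_mul_eq_zero hL4 h0 i (mem_offDiag.1 hq).2.2

lemma ProbabilityTheory.iIndepFun.covariance_sum_offDiag_sum_offDiag [DecidableEq ι]
    (hind : iIndepFun Z μ) (hL4 : ∀ i, MemLp (Z i) 4 μ) (h0 : ∀ i, μ[Z i] = 0)
    (h2 : ∀ i, ∫ ω, Z i ω ^ 2 ∂μ = σ2) (s t : Finset ι) :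
    cov[fun ω => ∑ p ∈ s.offDiag, Z p.1 ω * Z p.2 ω,
        fun ω => ∑ q ∈ t.offDiag, Z q.1 ω * Z q.2 ω; μ]
      = 2 * #(s ∩ t) * (#(s ∩ t) - 1) * σ2 ^ 2 := by
  rw [covariance_fun_sum_fun_sum' (fun p _ => (hL4 p.1).mul_of_four (hL4 p.2))
    (fun q _ => (hL4 q.1).mul_of_four (hL4 q.2))]
  have hswap : ∀ p : ι × ι, p.swap ∈ t.offDiag ↔ p ∈ t.offDiag := by
    intro p
    simp only [mem_offDiag, Prod.fst_swap, Prod.snd_swap, ne_comm]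
    tauto
  calc ∑ p ∈ s.offDiag, ∑ q ∈ t.offDiag,
        cov[fun ω => Z p.1 ω * Z p.2 ω, fun ω => Z q.1 ω * Z q.2 ω; μ]
      = ∑ p ∈ s.offDiag, if p ∈ t.offDiag then 2 * σ2 ^ 2 else 0 := by
        refine sum_congr rfl fun p hp => ?_
        rw [sum_congr rfl fun q hq => hind.covariance_mul_mul hL4 h0 h2
          (mem_offDiag.1 hp).2.2 (mem_offDiag.1 hq).2.2]
        simp only [sum_add_distrib, sum_ite_eq', hswap]
        split_ifs <;> ring
    _ = 2 * #(s ∩ t) * (#(s ∩ t) - 1) * σ2 ^ 2 := by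
        rw [sum_ite_mem, ← offDiag_inter, sum_const, nsmul_eq_mul, offDiag_card,
          Nat.cast_sub (Nat.le_mul_self _)]
        push_cast
        ring

lemma ProbabilityTheory.iIndepFun.covariance_sampleVariance [DecidableEq ι]
    (hind : iIndepFun Z μ) (hL4 : ∀ i, MemLp (Z i) 4 μ) (h0 : ∀ i, μ[Z i] = 0)
    (h2 : ∀ i, ∫ ω, Z i ω ^ 2 ∂μ = σ2) (h4 : ∀ i, ∫ ω, Z i ω ^ 4 ∂μ = κ) {s t : Finset ι}
    (hs : 2 ≤ #s) (ht : 2 ≤ #t) :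
    cov[fun ω => sampleVariance s (Z · ω), fun ω => sampleVariance t (Z · ω); μ]
      = #(s ∩ t) * (κ - σ2 ^ 2) / (#s * #t)
        + 2 * #(s ∩ t) * (#(s ∩ t) - 1) * σ2 ^ 2 / (#s * (#s - 1) * #t * (#t - 1)) := by
  have hsq : ∀ u : Finset ι, MemLp (fun ω => (∑ i ∈ u, Z i ω ^ 2) / #u) 2 μ := fun u => by
    simpa only [div_eq_mul_inv] using
      (memLp_finsetSum u fun i _ => (hL4 i).sq_of_four).mul_const _
  have hoff : ∀ u : Finset ι,
      MemLp (fun ω => (∑ p ∈ u.offDiag, Z p.1 ω * Z p.2 ω) / (#u * (#u - 1))) 2 μ := fun u => by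
    simpa only [div_eq_mul_inv] using
      (memLp_finsetSum u.offDiag fun p _ => (hL4 p.1).mul_of_four (hL4 p.2)).mul_const _
  simp only [sampleVariance_eq_sum_sq_sub_sum_offDiag _ hs,
    sampleVariance_eq_sum_sq_sub_sum_offDiag _ ht]
  rw [covariance_fun_sub_fun_sub (hsq s) (hoff s) (hsq t) (hoff t)]
  simp only [covariance_fun_div_left, covariance_fun_div_right,
    hind.covariance_sum_sq_sum_sq hL4 h2 h4, hind.covariance_sum_sq_sum_offDiag hL4 h0,
    covariance_comm (fun ω => ∑ p ∈ s.offDiag, Z p.1 ω * Z p.2 ω),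
    hind.covariance_sum_offDiag_sum_offDiag hL4 h0 h2, inter_comm t s]
  have hs1 := cast_card_sub_one_ne_zero hs
  have ht1 := cast_card_sub_one_ne_zero ht
  field_simp
  ring

lemma ProbabilityTheory.iIndepFun.covariance_sampleVariance_of_subset [DecidableEq ι]
    (hind : iIndepFun Z μ) (hL4 : ∀ i, MemLp (Z i) 4 μ) (h0 : ∀ i, μ[Z i] = 0)
    (h2 : ∀ i, ∫ ω, Z i ω ^ 2 ∂μ = σ2) (h4 : ∀ i, ∫ ω, Z i ω ^ 4 ∂μ = κ) {s t : Finset ι}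
    (hst : s ⊆ t) (hs : 2 ≤ #s) :
    cov[fun ω => sampleVariance s (Z · ω), fun ω => sampleVariance t (Z · ω); μ]
      = (κ - σ2 ^ 2) / #t + 2 * σ2 ^ 2 / (#t * (#t - 1)) := by
  have ht := hs.trans (card_le_card hst)
  rw [hind.covariance_sampleVariance hL4 h0 h2 h4 hs ht, inter_eq_left.2 hst]
  have hs1 := cast_card_sub_one_ne_zero hs
  have ht1 := cast_card_sub_one_ne_zero ht
  field_simp

lemma ProbabilityTheory.iIndepFun.covariance_sampleVariance_of_disjoint [DecidableEq ι]
    (hind : iIndepFun Z μ) (hL4 : ∀ i, MemLp (Z i) 4 μ) (h0 : ∀ i, μ[Z i] = 0)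
    (h2 : ∀ i, ∫ ω, Z i ω ^ 2 ∂μ = σ2) (h4 : ∀ i, ∫ ω, Z i ω ^ 4 ∂μ = κ) {s t : Finset ι}
    (hst : Disjoint s t) :
    cov[fun ω => sampleVariance s (Z · ω), fun ω => sampleVariance t (Z · ω); μ] = 0 := by
  rcases lt_or_ge #s 2 with hs | hs
  · simp [sampleVariance_of_card_lt_two _ hs]
  rcases lt_or_ge #t 2 with ht | ht
  · simp [sampleVariance_of_card_lt_two _ ht]
  simp [hind.covariance_sampleVariance hL4 h0 h2 h4 hs ht, disjoint_iff_inter_eq_empty.1 hst]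

lemma ProbabilityTheory.iIndepFun.variance_sampleVariance [DecidableEq ι]
    (hind : iIndepFun Z μ) (hL4 : ∀ i, MemLp (Z i) 4 μ) (h0 : ∀ i, μ[Z i] = 0)
    (h2 : ∀ i, ∫ ω, Z i ω ^ 2 ∂μ = σ2) (h4 : ∀ i, ∫ ω, Z i ω ^ 4 ∂μ = κ) {s : Finset ι}
    (hs : 2 ≤ #s) :
    Var[fun ω => sampleVariance s (Z · ω); μ] = (κ - (#s - 3) / (#s - 1) * σ2 ^ 2) / #s := by
  rw [← covariance_self (memLp_sampleVariance hL4 s).aemeasurable,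
    hind.covariance_sampleVariance_of_subset hL4 h0 h2 h4 subset_rfl hs]
  have hs1 := cast_card_sub_one_ne_zero hs
  field_simp
  ring

lemma ProbabilityTheory.iIndepFun.variance_sampleVariance_sub [DecidableEq ι]
    (hind : iIndepFun Z μ) (hL4 : ∀ i, MemLp (Z i) 4 μ) (h0 : ∀ i, μ[Z i] = 0)
    (h2 : ∀ i, ∫ ω, Z i ω ^ 2 ∂μ = σ2) (h4 : ∀ i, ∫ ω, Z i ω ^ 4 ∂μ = κ) {s t : Finset ι}
    (hst : s ⊆ t) (hs : 2 ≤ #s) :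
    Var[fun ω => sampleVariance t (Z · ω) - sampleVariance s (Z · ω); μ]
      = (1 / #s - 1 / #t) * (κ - 3 * σ2 ^ 2) + 2 * (1 / (#s - 1) - 1 / (#t - 1)) * σ2 ^ 2 := by
  have ht := hs.trans (card_le_card hst)
  rw [variance_fun_sub (memLp_sampleVariance hL4 t) (memLp_sampleVariance hL4 s),
    covariance_comm, hind.covariance_sampleVariance_of_subset hL4 h0 h2 h4 hst hs,
    hind.variance_sampleVariance hL4 h0 h2 h4 hs, hind.variance_sampleVariance hL4 h0 h2 h4 ht]
  have hs1 := cast_card_sub_one_ne_zero hs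
  have ht1 := cast_card_sub_one_ne_zero ht
  field_simp
  ring

end Moments

section Uncorrelated

variable {Ω α : Type*} {mΩ : MeasurableSpace Ω} {μ : Measure Ω} [IsFiniteMeasure μ]

lemma variance_sum_of_covariance_eq_zero {X : α → Ω → ℝ} {s : Finset α}
    (hX : ∀ i ∈ s, MemLp (X i) 2 μ)
    (hcov : (s : Set α).Pairwise fun i j => cov[X i, X j; μ] = 0) :
    Var[∑ i ∈ s, X i; μ] = ∑ i ∈ s, Var[X i; μ] := by
  rw [variance_sum' hX]
  refine sum_congr rfl fun i hi => ?_
  rw [sum_eq_single_of_mem i hi fun j hj hji => hcov hi hj hji.symm,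
    covariance_self (hX i hi).aemeasurable]

lemma variance_sum_sum_div_of_covariance_eq_zero {Y : α → ℕ → Ω → ℝ} (A : Finset α)
    (M : α → ℕ) (v : α → ℝ) (hY : ∀ ℓ m, MemLp (Y ℓ m) 2 μ)
    (hcov : ∀ ℓ m ℓ' m', (ℓ, m) ≠ (ℓ', m') → cov[Y ℓ m, Y ℓ' m'; μ] = 0)
    (hvar : ∀ ℓ ∈ A, ∀ m, Var[Y ℓ m; μ] = v ℓ) :
    Var[fun ω => ∑ ℓ ∈ A, (∑ m ∈ range (M ℓ), Y ℓ m ω) / M ℓ; μ] = ∑ ℓ ∈ A, v ℓ / M ℓ := by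
  have hsigma : (fun ω => ∑ ℓ ∈ A, (∑ m ∈ range (M ℓ), Y ℓ m ω) / M ℓ)
      = ∑ x ∈ A.sigma fun ℓ => range (M ℓ), fun ω => Y x.1 x.2 ω / M x.1 := by
    ext ω
    simp only [Finset.sum_apply, sum_sigma, sum_div]
  have hmem : ∀ x ∈ A.sigma fun ℓ => range (M ℓ), MemLp (fun ω => Y x.1 x.2 ω / M x.1) 2 μ :=
    fun x _ => by simpa only [div_eq_mul_inv] using (hY x.1 x.2).mul_const _
  rw [hsigma, variance_sum_of_covariance_eq_zero hmem, sum_sigma]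
  · refine sum_congr rfl fun ℓ hℓ => ?_
    simp only [div_eq_mul_inv, variance_mul_const, hvar ℓ hℓ, sum_const, card_range,
      nsmul_eq_mul]
    rcases eq_or_ne (M ℓ : ℝ) 0 with h | h
    · simp [h]
    · field_simp
  · rintro ⟨ℓ, m⟩ - ⟨ℓ', m'⟩ - hne
    rw [covariance_fun_div_left, covariance_fun_div_right,
      hcov ℓ m ℓ' m' fun h => hne (by obtain ⟨rfl, rfl⟩ := Prod.mk.inj h; rfl)]
    simp

end Uncorrelated

section Multilevel

variable {Ω : Type*} {mΩ : MeasurableSpace Ω} {μ : Measure Ω} {Z : ℕ × ℕ × ℕ → Ω → ℝ}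

def sampleBlock (ℓ m S : ℕ) : Finset (ℕ × ℕ × ℕ) := {ℓ} ×ˢ {m} ×ˢ range S

@[simp]
lemma card_sampleBlock (ℓ m S : ℕ) : #(sampleBlock ℓ m S) = S := by
  simp [sampleBlock]

lemma sampleBlock_mono (ℓ m : ℕ) {S S' : ℕ} (h : S ≤ S') :
    sampleBlock ℓ m S ⊆ sampleBlock ℓ m S' :=
  product_subset_product_right (product_subset_product_right (range_mono h))

lemma disjoint_sampleBlock {ℓ m ℓ' m' : ℕ} (h : (ℓ, m) ≠ (ℓ', m')) (S S' : ℕ) :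
    Disjoint (sampleBlock ℓ m S) (sampleBlock ℓ' m' S') := by
  simp only [sampleBlock, disjoint_product, disjoint_singleton]
  grind

lemma levelVar_eq_sampleVariance (X : ℕ → ℕ → ℕ → Ω → ℝ) (c : ℝ) (ℓ m S : ℕ) (ω : Ω) :
    levelVar X ℓ m S ω = sampleVariance (sampleBlock ℓ m S) fun p => X p.1 p.2.1 p.2.2 ω - c := by
  rw [sampleVariance_sub_const]
  simp [levelVar, levelMean, sampleVariance, sampleBlock]

/-- At level `0` the coarse block is empty, and an empty sample has sample variance `0`. -/
noncomputable def levelCorrection (Z : ℕ × ℕ × ℕ → Ω → ℝ) (T : ℕ → ℕ) (ℓ m : ℕ) (ω : Ω) : ℝ :=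
  sampleVariance (sampleBlock ℓ m (T ℓ)) (Z · ω)
    - sampleVariance (sampleBlock ℓ m (if ℓ = 0 then 0 else T (ℓ - 1))) (Z · ω)

lemma levelCorrection_zero (T : ℕ → ℕ) (m : ℕ) (ω : Ω) :
    levelCorrection Z T 0 m ω = sampleVariance (sampleBlock 0 m (T 0)) (Z · ω) := by
  simp [levelCorrection, sampleVariance_of_card_lt_two]

lemma levelCorrection_of_ne_zero (T : ℕ → ℕ) {ℓ : ℕ} (hℓ : ℓ ≠ 0) (m : ℕ) (ω : Ω) :
    levelCorrection Z T ℓ m ω = sampleVariance (sampleBlock ℓ m (T ℓ)) (Z · ω)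
      - sampleVariance (sampleBlock ℓ m (T (ℓ - 1))) (Z · ω) := by
  simp [levelCorrection, hℓ]

lemma memLp_levelCorrection (hL4 : ∀ i, MemLp (Z i) 4 μ) (T : ℕ → ℕ) (ℓ m : ℕ) :
    MemLp (levelCorrection Z T ℓ m) 2 μ :=
  (memLp_sampleVariance hL4 _).sub (memLp_sampleVariance hL4 _)

variable [IsProbabilityMeasure μ] {σ2 κ : ℝ}

lemma ProbabilityTheory.iIndepFun.covariance_levelCorrection_eq_zero (hind : iIndepFun Z μ)
    (hL4 : ∀ i, MemLp (Z i) 4 μ) (h0 : ∀ i, μ[Z i] = 0) (h2 : ∀ i, ∫ ω, Z i ω ^ 2 ∂μ = σ2)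
    (h4 : ∀ i, ∫ ω, Z i ω ^ 4 ∂μ = κ) (T : ℕ → ℕ) {ℓ m ℓ' m' : ℕ} (h : (ℓ, m) ≠ (ℓ', m')) :
    cov[levelCorrection Z T ℓ m, levelCorrection Z T ℓ' m'; μ] = 0 := by
  unfold levelCorrection
  rw [covariance_fun_sub_fun_sub (memLp_sampleVariance hL4 _)
    (memLp_sampleVariance hL4 _) (memLp_sampleVariance hL4 _) (memLp_sampleVariance hL4 _)]
  simp only [hind.covariance_sampleVariance_of_disjoint hL4 h0 h2 h4 (disjoint_sampleBlock h _ _)]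
  ring

lemma ProbabilityTheory.iIndepFun.variance_levelCorrection_zero (hind : iIndepFun Z μ)
    (hL4 : ∀ i, MemLp (Z i) 4 μ) (h0 : ∀ i, μ[Z i] = 0) (h2 : ∀ i, ∫ ω, Z i ω ^ 2 ∂μ = σ2)
    (h4 : ∀ i, ∫ ω, Z i ω ^ 4 ∂μ = κ) {T : ℕ → ℕ} (hT0 : 2 ≤ T 0) (m : ℕ) :
    Var[levelCorrection Z T 0 m; μ] = (κ - ((T 0 : ℝ) - 3) / ((T 0 : ℝ) - 1) * σ2 ^ 2) / T 0 := by
  simpa [funext (levelCorrection_zero (Z := Z) T m)] using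
    hind.variance_sampleVariance hL4 h0 h2 h4 (s := sampleBlock 0 m (T 0)) (by simpa)

lemma ProbabilityTheory.iIndepFun.variance_levelCorrection_of_ne_zero (hind : iIndepFun Z μ)
    (hL4 : ∀ i, MemLp (Z i) 4 μ) (h0 : ∀ i, μ[Z i] = 0) (h2 : ∀ i, ∫ ω, Z i ω ^ 2 ∂μ = σ2)
    (h4 : ∀ i, ∫ ω, Z i ω ^ 4 ∂μ = κ) {T : ℕ → ℕ} {ℓ : ℕ} (hℓ : ℓ ≠ 0) (hT : 2 ≤ T (ℓ - 1))
    (hle : T (ℓ - 1) ≤ T ℓ) (m : ℕ) :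
    Var[levelCorrection Z T ℓ m; μ]
      = (1 / (T (ℓ - 1) : ℝ) - 1 / (T ℓ : ℝ)) * (κ - 3 * σ2 ^ 2)
        + 2 * (1 / ((T (ℓ - 1) : ℝ) - 1) - 1 / ((T ℓ : ℝ) - 1)) * σ2 ^ 2 := by
  simpa [funext (levelCorrection_of_ne_zero (Z := Z) T hℓ m)] using
    hind.variance_sampleVariance_sub hL4 h0 h2 h4 (sampleBlock_mono ℓ m hle) (by simpa)

theorem ProbabilityTheory.iIndepFun.variance_multilevel_sampleVariance (hind : iIndepFun Z μ)
    (hL4 : ∀ i, MemLp (Z i) 4 μ) (h0 : ∀ i, μ[Z i] = 0) (h2 : ∀ i, ∫ ω, Z i ω ^ 2 ∂μ = σ2)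
    (h4 : ∀ i, ∫ ω, Z i ω ^ 4 ∂μ = κ) (L : ℕ) (T M : ℕ → ℕ) (hT0 : 2 ≤ T 0)
    (hT : ∀ ℓ < L, T ℓ < T (ℓ + 1)) :
    Var[fun ω => (∑ m ∈ range (M 0), sampleVariance (sampleBlock 0 m (T 0)) (Z · ω)) / M 0
        + ∑ ℓ ∈ Icc 1 L, (∑ m ∈ range (M ℓ),
            (sampleVariance (sampleBlock ℓ m (T ℓ)) (Z · ω)
              - sampleVariance (sampleBlock ℓ m (T (ℓ - 1))) (Z · ω))) / M ℓ; μ]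
      = (1 / ((M 0 : ℝ) * T 0)) * (κ - ((T 0 : ℝ) - 3) / ((T 0 : ℝ) - 1) * σ2 ^ 2)
        + (∑ ℓ ∈ Icc 1 L, (1 / (M ℓ : ℝ)) * (1 / (T (ℓ - 1) : ℝ) - 1 / (T ℓ : ℝ))
            * (κ - 3 * σ2 ^ 2))
        + ∑ ℓ ∈ Icc 1 L, (2 / (M ℓ : ℝ))
            * (1 / ((T (ℓ - 1) : ℝ) - 1) - 1 / ((T ℓ : ℝ) - 1)) * σ2 ^ 2 := by
  have hmono : MonotoneOn T (Set.Iic L) :=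
    (strictMonoOn_Iic_of_lt_succ fun m hm => by simpa using hT m hm).monotoneOn
  have hne : ∀ ℓ ∈ Icc 1 L, ℓ ≠ 0 := fun ℓ hℓ => by simp at hℓ; omega
  have hest : (fun ω => (∑ m ∈ range (M 0), sampleVariance (sampleBlock 0 m (T 0)) (Z · ω)) / M 0
        + ∑ ℓ ∈ Icc 1 L, (∑ m ∈ range (M ℓ),
            (sampleVariance (sampleBlock ℓ m (T ℓ)) (Z · ω)
              - sampleVariance (sampleBlock ℓ m (T (ℓ - 1))) (Z · ω))) / M ℓ)
      = fun ω => ∑ ℓ ∈ insert 0 (Icc 1 L),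
          (∑ m ∈ range (M ℓ), levelCorrection Z T ℓ m ω) / M ℓ := by
    ext ω
    simp only [sum_insert (show 0 ∉ Icc 1 L by simp), levelCorrection_zero]
    congr 1
    exact sum_congr rfl fun ℓ hℓ => by simp only [levelCorrection_of_ne_zero T (hne ℓ hℓ)]
  let v (ℓ : ℕ) : ℝ := if ℓ = 0 then (κ - ((T 0 : ℝ) - 3) / ((T 0 : ℝ) - 1) * σ2 ^ 2) / T 0
    else (1 / (T (ℓ - 1) : ℝ) - 1 / (T ℓ : ℝ)) * (κ - 3 * σ2 ^ 2)
      + 2 * (1 / ((T (ℓ - 1) : ℝ) - 1) - 1 / ((T ℓ : ℝ) - 1)) * σ2 ^ 2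
  have hvar : ∀ ℓ ∈ insert 0 (Icc 1 L), ∀ m, Var[levelCorrection Z T ℓ m; μ] = v ℓ := by
    intro ℓ hℓ m
    rcases mem_insert.1 hℓ with rfl | hℓ
    · exact hind.variance_levelCorrection_zero hL4 h0 h2 h4 hT0 m
    · obtain ⟨h1, hL⟩ := mem_Icc.1 hℓ
      simp only [v, if_neg (hne ℓ hℓ)]
      exact hind.variance_levelCorrection_of_ne_zero hL4 h0 h2 h4 (hne ℓ hℓ)
        (hT0.trans (hmono (by simp) (by simp; omega) (by omega)))
        (hmono (by simp; omega) (by simpa) (by omega)) m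
  rw [hest, variance_sum_sum_div_of_covariance_eq_zero _ M v (memLp_levelCorrection hL4 T)
    (fun ℓ m ℓ' m' h => hind.covariance_levelCorrection_eq_zero hL4 h0 h2 h4 T h) hvar,
    sum_insert (by simp), add_assoc, ← sum_add_distrib]
  congr 1
  · simp only [v, if_pos]
    ring
  · refine sum_congr rfl fun ℓ hℓ => ?_
    simp only [v, if_neg (hne ℓ hℓ)]
    ring

end Multilevel

theorem mlmc_variance_estimator_variance_general
    {Ω : Type*} [MeasureSpace Ω] [IsProbabilityMeasure (ℙ : Measure Ω)]
    (L : ℕ) (T M : ℕ → ℕ)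
    (hT0 : 2 ≤ T 0) (hTmono : ∀ ℓ < L, T ℓ < T (ℓ + 1))
    (X : ℕ → ℕ → ℕ → Ω → ℝ)
    (hindep : iIndepFun
      (fun p : ℕ × ℕ × ℕ => X p.1 p.2.1 p.2.2) ℙ)
    (hident : ∀ ℓ m t, IdentDistrib (X ℓ m t) (X 0 0 0) ℙ ℙ)
    (hL4 : ∀ ℓ m t, MemLp (X ℓ m t) 4 ℙ)
    (μ μ₂ μ₄ : ℝ) (hμ : μ = ∫ ω, X 0 0 0 ω)
    (hμ₂ : μ₂ = ∫ ω, (X 0 0 0 ω - μ) ^ 2)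
    (hμ₄ : μ₄ = ∫ ω, (X 0 0 0 ω - μ) ^ 4) :
    variance (fun ω => (∑ m ∈ range (M 0), levelVar X 0 m (T 0) ω) / (M 0)
        + ∑ ℓ ∈ Icc 1 L, (∑ m ∈ range (M ℓ),
            (levelVar X ℓ m (T ℓ) ω - levelVar X ℓ m (T (ℓ - 1)) ω)) / (M ℓ)) ℙ
      = (1 / ((M 0 : ℝ) * T 0)) * (μ₄ - ((T 0 : ℝ) - 3) / ((T 0 : ℝ) - 1) * μ₂ ^ 2)
        + (∑ ℓ ∈ Icc 1 L, (1 / (M ℓ : ℝ)) * (1 / (T (ℓ - 1) : ℝ) - 1 / (T ℓ : ℝ))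
            * (μ₄ - 3 * μ₂ ^ 2))
        + ∑ ℓ ∈ Icc 1 L, (2 / (M ℓ : ℝ))
            * (1 / ((T (ℓ - 1) : ℝ) - 1) - 1 / ((T ℓ : ℝ) - 1)) * μ₂ ^ 2 := by
  set Z : ℕ × ℕ × ℕ → Ω → ℝ := fun p ω => X p.1 p.2.1 p.2.2 ω - μ
  have hind : iIndepFun Z ℙ := hindep.comp (fun _ x => x - μ) fun _ => measurable_id.sub_const μ
  have hZ4 : ∀ p, MemLp (Z p) 4 ℙ := fun p => (hL4 _ _ _).sub (memLp_const μ)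
  have hmoment : ∀ p (k : ℕ), ∫ ω, Z p ω ^ k = ∫ ω, (X 0 0 0 ω - μ) ^ k := fun p k =>
    ((hident _ _ _).comp ((measurable_id.sub_const μ).pow_const k)).integral_eq
  have h0 : ∀ p, ∫ ω, Z p ω = 0 := fun p => by
    simpa [integral_sub ((hL4 0 0 0).integrable (by norm_num)), ← hμ] using hmoment p 1
  simp only [levelVar_eq_sampleVariance X μ]
  exact hind.variance_multilevel_sampleVariance hZ4 h0 (fun p => (hmoment p 2).trans hμ₂.symm)
    (fun p => (hmoment p 4).trans hμ₄.symm) L T M hT0 hTmono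

/-- Variance of the telescoping MLMC variance estimator. -/
theorem mlmc_variance_estimator_variance
    {Ω : Type*} [MeasureSpace Ω] [IsProbabilityMeasure (ℙ : Measure Ω)]
    (L : ℕ) (T M : ℕ → ℕ)
    (hT0 : 2 ≤ T 0) (hTmono : ∀ ℓ < L, T ℓ < T (ℓ + 1)) (hM : ∀ ℓ ≤ L, 1 ≤ M ℓ)
    (X : ℕ → ℕ → ℕ → Ω → ℝ)
    (hmeas : ∀ ℓ m t, Measurable (X ℓ m t))
    (hindep : iIndepFun
      (fun p : ℕ × ℕ × ℕ => X p.1 p.2.1 p.2.2) ℙ)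
    (hident : ∀ ℓ m t, IdentDistrib (X ℓ m t) (X 0 0 0) ℙ ℙ)
    (hL4 : ∀ ℓ m t, MemLp (X ℓ m t) 4 ℙ)
    (μ μ₂ μ₄ : ℝ) (hμ : μ = ∫ ω, X 0 0 0 ω)
    (hμ₂ : μ₂ = ∫ ω, (X 0 0 0 ω - μ) ^ 2)
    (hμ₄ : μ₄ = ∫ ω, (X 0 0 0 ω - μ) ^ 4) :
    variance (fun ω => (∑ m ∈ range (M 0), levelVar X 0 m (T 0) ω) / (M 0)
        + ∑ ℓ ∈ Icc 1 L, (∑ m ∈ range (M ℓ),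
            (levelVar X ℓ m (T ℓ) ω - levelVar X ℓ m (T (ℓ - 1)) ω)) / (M ℓ)) ℙ
      = (1 / ((M 0 : ℝ) * T 0)) * (μ₄ - ((T 0 : ℝ) - 3) / ((T 0 : ℝ) - 1) * μ₂ ^ 2)
        + (∑ ℓ ∈ Icc 1 L, (1 / (M ℓ : ℝ)) * (1 / (T (ℓ - 1) : ℝ) - 1 / (T ℓ : ℝ))
            * (μ₄ - 3 * μ₂ ^ 2))
        + ∑ ℓ ∈ Icc 1 L, (2 / (M ℓ : ℝ))
            * (1 / ((T (ℓ - 1) : ℝ) - 1) - 1 / ((T ℓ : ℝ) - 1)) * μ₂ ^ 2 :=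
  mlmc_variance_estimator_variance_general L T M hT0 hTmono X hindep hident hL4 μ μ₂ μ₄ hμ hμ₂ hμ₄
end

section
/- (Explicit MLMC mean allocation.) With level variances v_0 = μ₂/T_0 and v_ℓ = μ₂(1/T_{ℓ-1} - 1/T_ℓ), and costs a_0 = T_0, a_ℓ = T_ℓ - T_{ℓ-1}, the optimal continuous allocation under budget c = ∑ a_ℓ M_ℓ is M_0* = (c/T_0)(1 + ∑_{ℓ=1}^L (T_ℓ - T_{ℓ-1})/√(T_ℓ T_{ℓ-1}))^{-1} and M_i* = (c/√(T_i T_{i-1}))(1 + ∑_{ℓ=1}^L (T_ℓ - T_{ℓ-1})/√(T_ℓ T_{ℓ-1}))^{-1} for i = 1,...,L; in particular the optimal allocation is independent of μ₂. -/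
/-!
With `w₀ = 1/T₀`, `w_ℓ = 1/√(T_ℓ T_{ℓ-1})` and `S = 1 + ∑_{ℓ ≥ 1} (T_ℓ - T_{ℓ-1})/√(T_ℓ T_{ℓ-1})`,
the allocation is `M* = (c/S) w`, so `∑ a_ℓ M*_ℓ = (c/S) S = c`, and
`v_ℓ = μ₂ a_ℓ w_ℓ² = k a_ℓ M*_ℓ²` with `k = μ₂ (S/c)²` on every level. This is the Lagrange
condition for minimising `∑ v_ℓ / M_ℓ` on the hyperplane `∑ a_ℓ M_ℓ = c`; since `x ↦ 1/x` lies
above its tangents, it forces global optimality.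
-/

open Finset

theorem Finset.sum_div_le_sum_div_of_eq_mul_sq {ι : Type*} (s : Finset ι) {a v M M' : ι → ℝ}
    {k : ℝ} (hk : 0 ≤ k) (ha : ∀ i ∈ s, 0 ≤ a i) (hv : ∀ i ∈ s, v i = k * a i * M' i ^ 2)
    (hM : ∀ i ∈ s, 0 < M i) (hbudget : ∑ i ∈ s, a i * M i = ∑ i ∈ s, a i * M' i) :
    ∑ i ∈ s, v i / M' i ≤ ∑ i ∈ s, v i / M i := by
  have tangent : ∀ i ∈ s, v i / M' i ≤ v i / M i + k * (a i * M i - a i * M' i) := by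
    intro i hi
    have hMi := hM i hi
    have hai := ha i hi
    rw [hv i hi]
    rcases eq_or_ne (M' i) 0 with h0 | h0
    · have : 0 ≤ k * (a i * M i) := by positivity
      simpa [h0] using this
    have gap : k * a i * M' i ^ 2 / M i + k * (a i * M i - a i * M' i) - k * a i * M' i ^ 2 / M' i
        = k * a i * (M i - M' i) ^ 2 / M i := by
      field_simp
      ring
    have : 0 ≤ k * a i * (M i - M' i) ^ 2 / M i := by positivity
    linarith
  calc ∑ i ∈ s, v i / M' i
      ≤ ∑ i ∈ s, (v i / M i + k * (a i * M i - a i * M' i)) := sum_le_sum tangent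
    _ = ∑ i ∈ s, v i / M i := by
      rw [sum_add_distrib, ← mul_sum, sum_sub_distrib, hbudget, sub_self, mul_zero, add_zero]

theorem Finset.sum_range_succ_eq_add_sum_Icc {M : Type*} [AddCommMonoid M] (f : ℕ → M) (L : ℕ) :
    ∑ ℓ ∈ range (L + 1), f ℓ = f 0 + ∑ ℓ ∈ Icc 1 L, f ℓ := by
  rw [range_eq_Ico, sum_eq_sum_Ico_succ_bot L.succ_pos, Nat.succ_eq_add_one,
    Ico_add_one_right_eq_Icc]

theorem Finset.forall_mem_range_add_one {L : ℕ} {p : ℕ → Prop} (h0 : p 0)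
    (hpos : ∀ ℓ, 1 ≤ ℓ → ℓ ≤ L → p ℓ) : ∀ ℓ ∈ range (L + 1), p ℓ := by
  intro ℓ hℓ
  rcases Nat.eq_zero_or_pos ℓ with rfl | h1
  · exact h0
  · exact hpos ℓ h1 (mem_range_succ_iff.mp hℓ)

section StrictMonoOn

variable {L : ℕ} {T : ℕ → ℕ}

theorem cast_pos_of_strictMonoOn (hT0 : 1 ≤ T 0) (hTmono : ∀ ℓ < L, T ℓ < T (ℓ + 1))
    {ℓ : ℕ} (hℓ : ℓ ≤ L) : (0 : ℝ) < T ℓ := by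
  induction ℓ with
  | zero => exact_mod_cast hT0
  | succ n ih => exact (ih (n.le_succ.trans hℓ)).trans (by exact_mod_cast hTmono n hℓ)

theorem cast_pred_lt_of_strictMonoOn (hTmono : ∀ ℓ < L, T ℓ < T (ℓ + 1))
    {ℓ : ℕ} (h1 : 1 ≤ ℓ) (hL : ℓ ≤ L) : (T (ℓ - 1) : ℝ) < T ℓ := by
  have h := hTmono (ℓ - 1) (by omega)
  rw [Nat.sub_add_cancel h1] at h
  exact_mod_cast h

theorem sum_Icc_sub_div_sqrt_nonneg_of_strictMonoOn (hTmono : ∀ ℓ < L, T ℓ < T (ℓ + 1)) :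
    0 ≤ ∑ ℓ ∈ Icc 1 L, ((T ℓ : ℝ) - (T (ℓ - 1) : ℝ)) / Real.sqrt ((T ℓ : ℝ) * (T (ℓ - 1) : ℝ)) :=
  sum_nonneg fun _ hℓ => div_nonneg
    (sub_nonneg.mpr (cast_pred_lt_of_strictMonoOn hTmono (mem_Icc.mp hℓ).1 (mem_Icc.mp hℓ).2).le)
    (Real.sqrt_nonneg _)

end StrictMonoOn

theorem level_variance_eq_mul_cost_mul_sq {μ₂ c S t s : ℝ} (hc : c ≠ 0) (hS : S ≠ 0)
    (ht : 0 < t) (hs : 0 < s) :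
    μ₂ * (1 / s - 1 / t) = μ₂ * (S / c) ^ 2 * (t - s) * (c / Real.sqrt (t * s) * S⁻¹) ^ 2 := by
  rw [mul_pow, div_pow, div_pow, Real.sq_sqrt (by positivity)]
  field_simp

/-- Explicit optimal continuous allocation for the MLMC mean estimator: with
level variances `v₀ = μ₂/T₀`, `v_ℓ = μ₂(1/T_{ℓ-1} - 1/T_ℓ)` and costs
`a₀ = T₀`, `a_ℓ = T_ℓ - T_{ℓ-1}`, the stated `M*` (which does not involve `μ₂`)
satisfies the budget and minimises `∑ v_ℓ / M_ℓ`. -/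
theorem explicit_mlmc_mean_allocation
    (L : ℕ) (T : ℕ → ℕ) (hT0 : 1 ≤ T 0) (hTmono : ∀ ℓ < L, T ℓ < T (ℓ + 1))
    (μ₂ c : ℝ) (hμ₂ : 0 < μ₂) (hc : 0 < c)
    (v a : ℕ → ℝ)
    (hv0 : v 0 = μ₂ / T 0)
    (hvl : ∀ ℓ, 1 ≤ ℓ → ℓ ≤ L → v ℓ = μ₂ * (1 / (T (ℓ - 1) : ℝ) - 1 / (T ℓ : ℝ)))
    (ha0 : a 0 = T 0)
    (hal : ∀ ℓ, 1 ≤ ℓ → ℓ ≤ L → a ℓ = (T ℓ : ℝ) - (T (ℓ - 1) : ℝ))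
    (Mstar : ℕ → ℝ)
    (hM0 : Mstar 0 = (c / (T 0 : ℝ))
      * (1 + ∑ ℓ ∈ Icc 1 L,
          ((T ℓ : ℝ) - (T (ℓ - 1) : ℝ)) / Real.sqrt ((T ℓ : ℝ) * (T (ℓ - 1) : ℝ)))⁻¹)
    (hMi : ∀ i, 1 ≤ i → i ≤ L → Mstar i
      = (c / Real.sqrt ((T i : ℝ) * (T (i - 1) : ℝ)))
      * (1 + ∑ ℓ ∈ Icc 1 L,
          ((T ℓ : ℝ) - (T (ℓ - 1) : ℝ)) / Real.sqrt ((T ℓ : ℝ) * (T (ℓ - 1) : ℝ)))⁻¹) :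
    (∑ ℓ ∈ range (L + 1), a ℓ * Mstar ℓ = c) ∧
    (∀ M : ℕ → ℝ, (∀ ℓ ≤ L, 0 < M ℓ) → ∑ ℓ ∈ range (L + 1), a ℓ * M ℓ = c →
      ∑ ℓ ∈ range (L + 1), v ℓ / Mstar ℓ ≤ ∑ ℓ ∈ range (L + 1), v ℓ / M ℓ) := by
  have hTpos : ∀ {ℓ}, ℓ ≤ L → (0 : ℝ) < T ℓ := cast_pos_of_strictMonoOn hT0 hTmono
  have hTlt : ∀ {ℓ}, 1 ≤ ℓ → ℓ ≤ L → (T (ℓ - 1) : ℝ) < T ℓ :=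
    cast_pred_lt_of_strictMonoOn hTmono
  set d : ℕ → ℝ := fun ℓ =>
    ((T ℓ : ℝ) - (T (ℓ - 1) : ℝ)) / Real.sqrt ((T ℓ : ℝ) * (T (ℓ - 1) : ℝ))
  set S := 1 + ∑ ℓ ∈ Icc 1 L, d ℓ with hS
  have hS_pos : 0 < S := by linarith [sum_Icc_sub_div_sqrt_nonneg_of_strictMonoOn hTmono]
  clear_value S
  have hT0_ne : (T 0 : ℝ) ≠ 0 := (hTpos L.zero_le).ne'
  have budget : ∑ ℓ ∈ range (L + 1), a ℓ * Mstar ℓ = c := by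
    have level : ∀ ℓ ∈ Icc 1 L, a ℓ * Mstar ℓ = c * S⁻¹ * d ℓ := fun ℓ hℓ => by
      rw [hal ℓ (mem_Icc.mp hℓ).1 (mem_Icc.mp hℓ).2, hMi ℓ (mem_Icc.mp hℓ).1 (mem_Icc.mp hℓ).2]
      ring
    rw [sum_range_succ_eq_add_sum_Icc, ha0, hM0, sum_congr rfl level, ← mul_sum,
      eq_sub_of_add_eq' hS.symm]
    field_simp
    ring
  have lagrange : ∀ ℓ ∈ range (L + 1), v ℓ = μ₂ * (S / c) ^ 2 * a ℓ * Mstar ℓ ^ 2 :=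
    forall_mem_range_add_one (by rw [hv0, ha0, hM0]; field_simp) fun ℓ h1 hL => by
      rw [hvl ℓ h1 hL, hal ℓ h1 hL, hMi ℓ h1 hL]
      exact level_variance_eq_mul_cost_mul_sq hc.ne' hS_pos.ne' (hTpos hL) (hTpos (by omega))
  have ha_nonneg : ∀ ℓ ∈ range (L + 1), 0 ≤ a ℓ :=
    forall_mem_range_add_one (by rw [ha0]; positivity) fun ℓ h1 hL => by
      rw [hal ℓ h1 hL]
      exact sub_nonneg.mpr (hTlt h1 hL).le
  exact ⟨budget, fun M hM hMc => sum_div_le_sum_div_of_eq_mul_sq _ (by positivity) ha_nonneg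
    lagrange (fun ℓ hℓ => hM ℓ (mem_range_succ_iff.mp hℓ)) (hMc.trans budget.symm)⟩
end
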